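/- arXiv:math/0511518 — 6 statements merged into one kernel-verified Lean document; each statement's English description precedes it below -/
import Mathlib

section
/- Let B⊂[a,b] be a closed set with a,b∈B, and let f:[a,b]→ℝ be continuous. If the Lebesgue measure of f(B) is zero, then V(f,[a,b]) = Σ_{i∈I} V(f,[c_i,d_i]), where (c_i,d_i), i∈I⊂ℕ, are all the intervals contiguous to B in [a,b]. -/
/-!
Contiguous intervals have pairwise disjoint interiors, so any finitely many of them lie side by
side in `[a, b]` and their variations add up to at most `V(f, [a, b])`.

Conversely, for `x ≤ y` the intermediate value theorem gives `|f y - f x| ≤ λ(f([x, y]))`. Since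
`[x, y] ⊆ B ∪ ⋃ᵢ [cᵢ, dᵢ]` and `λ(f(B)) = 0`, this is at most
`Σᵢ λ(f([cᵢ, dᵢ] ∩ [x, y])) ≤ Σᵢ V(f, [cᵢ, dᵢ] ∩ [x, y])`, because the image of a set under a real
function has measure at most its diameter. Summing over a partition of `[a, b]` and exchanging the
two sums bounds `V(f, [a, b])` by `Σᵢ V(f, [cᵢ, dᵢ])`.
-/

open Set MeasureTheory
open scoped ENNReal NNReal

/-- The real-valued variation function `v_f(x) = V(f,[a,x])`. -/
noncomputable def vfn {X : Type*} [NormedAddCommGroup X] (f : ℝ → X) (a x : ℝ) : ℝ :=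
  (eVariationOn f (Set.Icc a x)).toReal

/-- The fractional variation `V_α(g, K)`: the supremum of sums
`Σ |g(b_i) - g(a_i)|^α` over finite collections of non-overlapping intervals
`[a_i, b_i]` with endpoints in `K`. -/
noncomputable def fracVar (α : ℝ) (g : ℝ → ℝ) (K : Set ℝ) : ℝ≥0∞ :=
  ⨆ (m : ℕ) (p : Fin m → ℝ × ℝ)
    (_ : ∀ i, (p i).1 ∈ K ∧ (p i).2 ∈ K ∧ (p i).1 ≤ (p i).2)
    (_ : ∀ i j, i < j → (p i).2 ≤ (p j).1),
    ∑ i, ENNReal.ofReal (|g (p i).2 - g (p i).1| ^ α)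

/-- `g` is twice differentiable on `[a,b]` (unilateral derivatives at the endpoints). -/
def TwiceDiffOn {X : Type*} [NormedAddCommGroup X] [NormedSpace ℝ X]
    (g : ℝ → X) (a b : ℝ) : Prop :=
  ∃ g' g'' : ℝ → X,
    (∀ x ∈ Set.Icc a b, HasDerivWithinAt g (g' x) (Set.Icc a b) x) ∧
    (∀ x ∈ Set.Icc a b, HasDerivWithinAt g' (g'' x) (Set.Icc a b) x)

/-- `f` restricted to `[c,d]` admits an arc-length parametrization which is
twice differentiable: `f` has bounded variation on `[c,d]` and there is a twice
differentiable `g` on `[0, V(f,[c,d])]` with `g ∘ v_f = f` on `[c,d]`. -/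
def HasC2ArcLengthParam {X : Type*} [NormedAddCommGroup X] [NormedSpace ℝ X]
    (f : ℝ → X) (c d : ℝ) : Prop :=
  BoundedVariationOn f (Set.Icc c d) ∧
  ∃ g : ℝ → X, TwiceDiffOn g 0 (vfn f c d) ∧ ∀ x ∈ Set.Icc c d, g (vfn f c x) = f x

/-- The set `K_f` of points `x ∈ [a,b]` such that there is no open interval `U ∋ x`
such that `f` restricted to `closure U ∩ [a,b]` is either constant or admits a twice
differentiable arc-length parametrization. -/
def Kset {X : Type*} [NormedAddCommGroup X] [NormedSpace ℝ X]
    (f : ℝ → X) (a b : ℝ) : Set ℝ :=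
  {x : ℝ | x ∈ Set.Icc a b ∧ ¬ ∃ c d : ℝ, c < x ∧ x < d ∧
    ((∀ y ∈ Set.Icc (max c a) (min d b), ∀ z ∈ Set.Icc (max c a) (min d b), f y = f z) ∨
     HasC2ArcLengthParam f (max c a) (min d b))}

/-- `f : [a,b] → X` is `VBG_{1/2}`: `f` has bounded variation and `K_f` is a countable
union of closed sets `A m` with `V_{1/2}(v_f, A m) < ∞`. -/
def VBGHalf {X : Type*} [NormedAddCommGroup X] [NormedSpace ℝ X]
    (f : ℝ → X) (a b : ℝ) : Prop :=
  BoundedVariationOn f (Set.Icc a b) ∧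
  ∃ A : ℕ → Set ℝ,
    (∀ m, IsClosed (A m) ∧ A m ⊆ Set.Icc a b ∧ fracVar (1/2) (vfn f a) (A m) < ⊤) ∧
    Kset f a b = ⋃ m, A m

/-- `f` is Lebesgue equivalent to `g` on `[a,b]`: `g = f ∘ h` for some homeomorphism
`h` of `[a,b]` onto itself. -/
def LebEquiv {X : Type*} [NormedAddCommGroup X] [NormedSpace ℝ X]
    (f g : ℝ → X) (a b : ℝ) : Prop :=
  ∃ h : ℝ → ℝ, ContinuousOn h (Set.Icc a b) ∧
    Set.BijOn h (Set.Icc a b) (Set.Icc a b) ∧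
    ∀ x ∈ Set.Icc a b, g x = f (h x)

/-- `φ` is pointwise Lipschitz on `s`: at every `x ∈ s` the difference quotients of
`φ` are bounded near `x`. -/
def PtwiseLipschitzOn {X : Type*} [NormedAddCommGroup X]
    (φ : ℝ → X) (s : Set ℝ) : Prop :=
  ∀ x ∈ s, ∃ C : ℝ, ∃ δ > 0, ∀ y ∈ s, |y - x| < δ → ‖φ y - φ x‖ ≤ C * |y - x|

/-- The norm of `X` is Gâteaux differentiable away from `0`. -/
def GateauxSmoothNorm (X : Type*) [NormedAddCommGroup X] [NormedSpace ℝ X] : Prop :=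
  ∀ x : X, x ≠ 0 → ∃ L : X →L[ℝ] ℝ, ∀ v : X, HasLineDerivAt ℝ (fun y : X => ‖y‖) (L v) x v

/-- `g` is absolutely continuous on `[a,b]` (ε-δ definition with finite collections of
non-overlapping intervals). -/
def AbsContOn (g : ℝ → ℝ) (a b : ℝ) : Prop :=
  ∀ ε > 0, ∃ δ > 0, ∀ n : ℕ, ∀ p : Fin n → ℝ × ℝ,
    (∀ i, (p i).1 ∈ Set.Icc a b ∧ (p i).2 ∈ Set.Icc a b ∧ (p i).1 ≤ (p i).2) →
    (∀ i j, i < j → (p i).2 ≤ (p j).1) →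
    (∑ i, ((p i).2 - (p i).1)) < δ →
    (∑ i, |g (p i).2 - g (p i).1|) < ε

abbrev ContiguousInterval {α : Type*} [LinearOrder α] (B : Set α) :=
  {p : α × α // p.1 ∈ B ∧ p.2 ∈ B ∧ p.1 < p.2 ∧ Ioo p.1 p.2 ∩ B = ∅}

namespace ContiguousInterval

section LinearOrder

variable {α : Type*} [LinearOrder α] {B : Set α}

theorem left_le_of_mem_Ioo {p q : ContiguousInterval B} {w : α}
    (hp : w ∈ Ioo p.1.1 p.1.2) (hq : w ∈ Ioo q.1.1 q.1.2) : p.1.1 ≤ q.1.1 := by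
  by_contra! h
  exact eq_empty_iff_forall_notMem.1 q.2.2.2.2 p.1.1 ⟨⟨h, hp.1.trans hq.2⟩, p.2.1⟩

theorem right_le_of_mem_Ioo {p q : ContiguousInterval B} {w : α}
    (hp : w ∈ Ioo p.1.1 p.1.2) (hq : w ∈ Ioo q.1.1 q.1.2) : p.1.2 ≤ q.1.2 := by
  by_contra! h
  exact eq_empty_iff_forall_notMem.1 p.2.2.2.2 q.1.2 ⟨⟨hp.1.trans hq.2, h⟩, q.2.2.1⟩

theorem eq_of_mem_Ioo {p q : ContiguousInterval B} {w : α}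
    (hp : w ∈ Ioo p.1.1 p.1.2) (hq : w ∈ Ioo q.1.1 q.1.2) : p = q :=
  Subtype.ext <| Prod.ext
    ((left_le_of_mem_Ioo hp hq).antisymm (left_le_of_mem_Ioo hq hp))
    ((right_le_of_mem_Ioo hp hq).antisymm (right_le_of_mem_Ioo hq hp))

theorem pairwiseDisjoint_Ioo (s : Set (ContiguousInterval B)) :
    s.PairwiseDisjoint fun p => Ioo p.1.1 p.1.2 :=
  fun _ _ _ _ hpq => disjoint_left.2 fun _ hp hq => hpq (eq_of_mem_Ioo hp hq)

end LinearOrder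

theorem exists_mem_Ioo {α : Type*} [ConditionallyCompleteLinearOrder α] [TopologicalSpace α]
    [OrderTopology α] {B : Set α} (hB : IsClosed B) {a b z : α} (ha : a ∈ B) (hb : b ∈ B)
    (hz : z ∈ Icc a b) (hzB : z ∉ B) : ∃ p : ContiguousInterval B, z ∈ Ioo p.1.1 p.1.2 := by
  have hbelow : BddAbove (B ∩ Iic z) := ⟨z, fun _ hx => hx.2⟩
  have habove : BddBelow (B ∩ Ici z) := ⟨z, fun _ hx => hx.2⟩
  obtain ⟨hcB, hcz⟩ : sSup (B ∩ Iic z) ∈ B ∩ Iic z :=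
    (hB.inter isClosed_Iic).csSup_mem ⟨a, ha, hz.1⟩ hbelow
  obtain ⟨hdB, hzd⟩ : sInf (B ∩ Ici z) ∈ B ∩ Ici z :=
    (hB.inter isClosed_Ici).csInf_mem ⟨b, hb, hz.2⟩ habove
  have hcz' : sSup (B ∩ Iic z) < z := hcz.lt_of_ne fun h => hzB (h ▸ hcB)
  have hzd' : z < sInf (B ∩ Ici z) := hzd.lt_of_ne fun h => hzB (h ▸ hdB)
  have hgap : Ioo (sSup (B ∩ Iic z)) (sInf (B ∩ Ici z)) ∩ B = ∅ := by
    refine eq_empty_iff_forall_notMem.2 fun w ⟨⟨hcw, hwd⟩, hwB⟩ => ?_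
    rcases le_total w z with h | h
    · exact (le_csSup hbelow ⟨hwB, h⟩).not_gt hcw
    · exact (csInf_le habove ⟨hwB, h⟩).not_gt hwd
  exact ⟨⟨(sSup (B ∩ Iic z), sInf (B ∩ Ici z)), hcB, hdB, hcz'.trans hzd', hgap⟩, hcz', hzd'⟩

instance countable (B : Set ℝ) : Countable (ContiguousInterval B) := by
  choose r hr using fun p : ContiguousInterval B => exists_rat_btwn p.2.2.2.1
  exact Function.Injective.countable (f := r) fun p q h =>
    eq_of_mem_Ioo (hr p) (h ▸ hr q : (r p : ℝ) ∈ Ioo q.1.1 q.1.2)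

end ContiguousInterval

namespace eVariationOn

variable {α E : Type*} [LinearOrder α] [PseudoEMetricSpace E]

theorem sum_inter_Icc_le (f : α → E) (s : Set α) {u : ℕ → α} (hu : Monotone u) (n : ℕ) :
    ∑ i ∈ Finset.range n, eVariationOn f (s ∩ Icc (u i) (u (i + 1))) ≤ eVariationOn f s := by
  suffices h : ∀ n, ∑ i ∈ Finset.range n, eVariationOn f (s ∩ Icc (u i) (u (i + 1))) ≤
      eVariationOn f (s ∩ Iic (u n)) from
    (h n).trans (eVariationOn.mono f inter_subset_left)
  intro n
  induction n with
  | zero => simp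
  | succ n ih =>
    rw [Finset.sum_range_succ]
    calc _ ≤ eVariationOn f (s ∩ Iic (u n)) + eVariationOn f (s ∩ Icc (u n) (u (n + 1))) := by
          gcongr
      _ ≤ eVariationOn f (s ∩ Iic (u n) ∪ s ∩ Icc (u n) (u (n + 1))) :=
          add_le_union f fun _ hx _ hy => hx.2.trans hy.2.1
      _ ≤ eVariationOn f (s ∩ Iic (u (n + 1))) :=
          eVariationOn.mono f <| union_subset
            (inter_subset_inter_right _ (Iic_subset_Iic.2 (hu n.le_succ)))
            (inter_subset_inter_right _ Icc_subset_Iic_self)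

theorem sum_Icc_le_of_pairwiseDisjoint [DenselyOrdered α] {ι : Type*} (f : α → E)
    {s : Finset ι} {c d : ι → α} (hcd : ∀ i ∈ s, c i < d i)
    (hdisj : (s : Set ι).PairwiseDisjoint fun i => Ioo (c i) (d i)) {S : Set α}
    (hS : ∀ i ∈ s, Icc (c i) (d i) ⊆ S) :
    ∑ i ∈ s, eVariationOn f (Icc (c i) (d i)) ≤ eVariationOn f S := by
  classical
  induction s using Finset.induction_on_max_value c generalizing S with
  | empty => simp
  | insert j s hj hmax ih =>
    have hleft : ∀ i ∈ s, d i ≤ c j := fun i hi => by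
      have h := Set.Ioo_disjoint_Ioo.1 <| hdisj (Finset.mem_insert_of_mem hi)
        (Finset.mem_insert_self j s) (ne_of_mem_of_not_mem hi hj)
      rw [max_eq_right (hmax i hi)] at h
      exact (min_le_iff.1 h).resolve_right (hcd j (Finset.mem_insert_self j s)).not_ge
    rw [Finset.sum_insert hj, add_comm]
    calc _ ≤ eVariationOn f (S ∩ Iic (c j)) + eVariationOn f (Icc (c j) (d j)) := by
          gcongr
          refine ih (fun i hi => hcd i (Finset.mem_insert_of_mem hi))
            (hdisj.subset (by simp)) fun i hi => subset_inter (hS i (Finset.mem_insert_of_mem hi))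
              (Icc_subset_Iic_self.trans (Iic_subset_Iic.2 (hleft i hi)))
      _ ≤ eVariationOn f (S ∩ Iic (c j) ∪ Icc (c j) (d j)) :=
          add_le_union f fun _ hx _ hy => hx.2.trans hy.1
      _ ≤ eVariationOn f S :=
          eVariationOn.mono f (union_subset inter_subset_left (hS j (Finset.mem_insert_self j s)))

end eVariationOn

theorem Real.volume_image_le_eVariationOn {α : Type*} [LinearOrder α] (f : α → ℝ) (s : Set α) :
    volume (f '' s) ≤ eVariationOn f s :=
  (Real.volume_le_diam _).trans <|
    Metric.ediam_image_le_iff.2 fun _ hx _ hy => eVariationOn.edist_le f hx hy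

theorem edist_le_volume_image_Icc {f : ℝ → ℝ} {x y : ℝ} (hxy : x ≤ y)
    (hf : ContinuousOn f (Icc x y)) : edist (f y) (f x) ≤ volume (f '' Icc x y) := by
  rw [← uIcc_of_le hxy] at hf ⊢
  rw [edist_dist, Real.dist_eq, ← Real.volume_interval]
  exact measure_mono (intermediate_value_uIcc hf)

section Contiguous

variable {B : Set ℝ} {a b : ℝ} {f : ℝ → ℝ}

theorem edist_le_tsum_eVariationOn_contiguous (hB : IsClosed B) (ha : a ∈ B) (hb : b ∈ B)
    (h0 : volume (f '' B) = 0) {x y : ℝ} (hax : a ≤ x) (hyb : y ≤ b) (hxy : x ≤ y)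
    (hf : ContinuousOn f (Icc x y)) :
    edist (f y) (f x) ≤
      ∑' p : ContiguousInterval B, eVariationOn f (Icc p.1.1 p.1.2 ∩ Icc x y) := by
  have hcover : f '' Icc x y ⊆
      f '' B ∪ ⋃ p : ContiguousInterval B, f '' (Icc p.1.1 p.1.2 ∩ Icc x y) := by
    rintro _ ⟨z, hz, rfl⟩
    by_cases hzB : z ∈ B
    · exact Or.inl (mem_image_of_mem f hzB)
    · obtain ⟨p, hp⟩ := ContiguousInterval.exists_mem_Ioo hB ha hb
        ⟨hax.trans hz.1, hz.2.trans hyb⟩ hzB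
      exact Or.inr (mem_iUnion.2 ⟨p, mem_image_of_mem f ⟨Ioo_subset_Icc_self hp, hz⟩⟩)
  calc edist (f y) (f x) ≤ volume (f '' Icc x y) := edist_le_volume_image_Icc hxy hf
    _ ≤ volume (f '' B) + ∑' p : ContiguousInterval B, volume (f '' (Icc p.1.1 p.1.2 ∩ Icc x y)) :=
        (measure_mono hcover).trans <|
          (measure_union_le _ _).trans (by gcongr; exact measure_iUnion_le _)
    _ ≤ _ := by
        rw [h0, zero_add]
        exact ENNReal.tsum_le_tsum fun p => Real.volume_image_le_eVariationOn f _

theorem eVariationOn_le_tsum_contiguous (hB : IsClosed B) (ha : a ∈ B) (hb : b ∈ B)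
    (hf : ContinuousOn f (Icc a b)) (h0 : volume (f '' B) = 0) :
    eVariationOn f (Icc a b) ≤
      ∑' p : ContiguousInterval B, eVariationOn f (Icc p.1.1 p.1.2) := by
  refine iSup_le fun ⟨n, u, hu, hus⟩ => ?_
  calc ∑ i ∈ Finset.range n, edist (f (u (i + 1))) (f (u i))
      ≤ ∑ i ∈ Finset.range n, ∑' p : ContiguousInterval B,
          eVariationOn f (Icc p.1.1 p.1.2 ∩ Icc (u i) (u (i + 1))) :=
        Finset.sum_le_sum fun i _ =>
          edist_le_tsum_eVariationOn_contiguous hB ha hb h0 (hus i).1 (hus (i + 1)).2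
            (hu i.le_succ) (hf.mono (Icc_subset_Icc (hus i).1 (hus (i + 1)).2))
    _ = ∑' p : ContiguousInterval B, ∑ i ∈ Finset.range n,
          eVariationOn f (Icc p.1.1 p.1.2 ∩ Icc (u i) (u (i + 1))) :=
        (Summable.tsum_finsetSum fun _ _ => ENNReal.summable).symm
    _ ≤ ∑' p : ContiguousInterval B, eVariationOn f (Icc p.1.1 p.1.2) :=
        ENNReal.tsum_le_tsum fun _ => eVariationOn.sum_inter_Icc_le f _ hu n

end Contiguous

theorem tsum_contiguous_le_eVariationOn {α E : Type*} [LinearOrder α] [DenselyOrdered α]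
    [PseudoEMetricSpace E] {B : Set α} (f : α → E) {S : Set α}
    (hS : ∀ p : ContiguousInterval B, Icc p.1.1 p.1.2 ⊆ S) :
    ∑' p : ContiguousInterval B, eVariationOn f (Icc p.1.1 p.1.2) ≤ eVariationOn f S := by
  rw [ENNReal.tsum_eq_iSup_sum]
  exact iSup_le fun s => eVariationOn.sum_Icc_le_of_pairwiseDisjoint f (fun p _ => p.2.2.2.1)
    (ContiguousInterval.pairwiseDisjoint_Ioo _) fun p _ => hS p

theorem stmt5_general {a b : ℝ} {B : Set ℝ} (hB : IsClosed B)
    (hBs : B ⊆ Set.Icc a b) (ha : a ∈ B) (hb : b ∈ B)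
    {f : ℝ → ℝ} (hf : ContinuousOn f (Set.Icc a b))
    (h0 : volume (f '' B) = 0) :
    eVariationOn f (Set.Icc a b) =
      ∑' p : {p : ℝ × ℝ // p.1 ∈ B ∧ p.2 ∈ B ∧ p.1 < p.2 ∧ Set.Ioo p.1 p.2 ∩ B = ∅},
        eVariationOn f (Set.Icc (p : ℝ × ℝ).1 (p : ℝ × ℝ).2) :=
  (eVariationOn_le_tsum_contiguous hB ha hb hf h0).antisymm <|
    tsum_contiguous_le_eVariationOn f fun p => Icc_subset_Icc (hBs p.2.1).1 (hBs p.2.2.1).2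

/-- If `B ⊆ [a,b]` is closed with `a, b ∈ B`, `f : [a,b] → ℝ` is
continuous, and `λ(f(B)) = 0`, then `V(f,[a,b]) = Σᵢ V(f,[cᵢ,dᵢ])`, where `(cᵢ,dᵢ)`
are all the intervals contiguous to `B` in `[a,b]` (equality in `[0,∞]`). -/
theorem stmt5 {a b : ℝ} (hab : a < b) {B : Set ℝ} (hB : IsClosed B)
    (hBs : B ⊆ Set.Icc a b) (ha : a ∈ B) (hb : b ∈ B)
    {f : ℝ → ℝ} (hf : ContinuousOn f (Set.Icc a b))
    (h0 : volume (f '' B) = 0) :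
    eVariationOn f (Set.Icc a b) =
      ∑' p : {p : ℝ × ℝ // p.1 ∈ B ∧ p.2 ∈ B ∧ p.1 < p.2 ∧ Set.Ioo p.1 p.2 ∩ B = ∅},
        eVariationOn f (Set.Icc (p : ℝ × ℝ).1 (p : ℝ × ℝ).2) :=
  stmt5_general hB hBs ha hb hf h0
end

section
/- Let α∈(0,1), let A⊂ℝ be bounded, and let f:A→ℝ be uniformly continuous with V_α(f,A) < ∞. Then the closure of f(A) has Lebesgue measure zero. -/
open Set MeasureTheory
open scoped ENNReal NNReal

open Filter

/-!
If `closure (f '' A)` had positive measure `> L`, then for every `N` it would contain `N + 1`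
points that are `L / N` apart; approximating them by values `f (x i)` and sorting the `x i`
gives `N` non-overlapping intervals with endpoints in `A` on each of which `f` oscillates by at
least `L / (2 N)`. Hence `V_α(f, A) ≥ N (L / (2 N)) ^ α = N ^ (1 - α) (L / 2) ^ α`, which is
unbounded since `α < 1`.
-/

lemma sum_le_fracVar (α : ℝ) (g : ℝ → ℝ) (K : Set ℝ) {n : ℕ} (p : Fin n → ℝ × ℝ)
    (h1 : ∀ i, (p i).1 ∈ K ∧ (p i).2 ∈ K ∧ (p i).1 ≤ (p i).2)
    (h2 : ∀ i j, i < j → (p i).2 ≤ (p j).1) :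
    ∑ i, ENNReal.ofReal (|g (p i).2 - g (p i).1| ^ α) ≤ fracVar α g K :=
  le_iSup_of_le n (le_iSup_of_le p (le_iSup_of_le h1 (le_iSup_of_le h2 le_rfl)))

lemma ofReal_nat_mul_rpow_le_fracVar {α ε : ℝ} (hα : 0 ≤ α) (hε : 0 ≤ ε) {f : ℝ → ℝ}
    {A : Set ℝ} {N : ℕ} (x : Fin (N + 1) → ℝ) (hxA : ∀ i, x i ∈ A)
    (hsep : ∀ i j, i ≠ j → ε ≤ |f (x i) - f (x j)|) :
    ENNReal.ofReal (N * ε ^ α) ≤ fracVar α f A := by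
  let σ := Tuple.sort x
  have hmono : Monotone (x ∘ σ) := Tuple.monotone_sort x
  let p : Fin N → ℝ × ℝ := fun i => (x (σ i.castSucc), x (σ i.succ))
  have hp : ∀ i, (p i).1 ∈ A ∧ (p i).2 ∈ A ∧ (p i).1 ≤ (p i).2 := fun i =>
    ⟨hxA _, hxA _, hmono Fin.castSucc_lt_succ.le⟩
  have hdisj : ∀ i j, i < j → (p i).2 ≤ (p j).1 := fun i j hij =>
    hmono (Fin.succ_le_castSucc_iff.mpr hij)
  have hterm : ∀ i, ENNReal.ofReal (ε ^ α) ≤ ENNReal.ofReal (|f (p i).2 - f (p i).1| ^ α) :=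
    fun i => ENNReal.ofReal_le_ofReal <| Real.rpow_le_rpow hε
      (hsep _ _ (σ.injective.ne Fin.castSucc_lt_succ.ne')) hα
  calc ENNReal.ofReal (N * ε ^ α) = ∑ _i : Fin N, ENNReal.ofReal (ε ^ α) := by
        rw [ENNReal.ofReal_mul (Nat.cast_nonneg N), ENNReal.ofReal_natCast]; simp
    _ ≤ ∑ i, ENNReal.ofReal (|f (p i).2 - f (p i).1| ^ α) :=
        Finset.sum_le_sum fun i _ => hterm i
    _ ≤ fracVar α f A := sum_le_fracVar α f A p hp hdisj

/-- Greedy choice: take the least point of `K`, then recurse on `K ∩ [min K + δ, ∞)`. -/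
lemma IsCompact.exists_separated_of_lt_volume {K : Set ℝ} (hK : IsCompact K) {δ : ℝ}
    (hδ : 0 < δ) {n : ℕ} (hvol : ENNReal.ofReal (n * δ) < volume K) :
    ∃ z : Fin (n + 1) → ℝ, (∀ i, z i ∈ K) ∧ ∀ i j, i < j → z i + δ ≤ z j := by
  induction n generalizing K with
  | zero =>
    obtain ⟨z, hz⟩ := nonempty_of_measure_ne_zero (pos_of_gt hvol).ne'
    exact ⟨fun _ => z, fun _ => hz, fun i j hij => by omega⟩
  | succ n ih =>
    have hne : K.Nonempty := nonempty_of_measure_ne_zero (pos_of_gt hvol).ne'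
    set m := sInf K
    have hm : m ∈ K := hK.sInf_mem hne
    have hcover : K ⊆ Ico m (m + δ) ∪ (K ∩ Ici (m + δ)) := fun x hx => by
      rcases lt_or_ge x (m + δ) with h | h
      · exact Or.inl ⟨csInf_le hK.bddBelow hx, h⟩
      · exact Or.inr ⟨hx, h⟩
    have hvol' : ENNReal.ofReal (n * δ) < volume (K ∩ Ici (m + δ)) := by
      have hsplit :
          ENNReal.ofReal ((n + 1 : ℕ) * δ) = ENNReal.ofReal δ + ENNReal.ofReal (n * δ) := by
        rw [← ENNReal.ofReal_add hδ.le (by positivity)]; push_cast; ring_nf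
      have hle : volume K ≤ ENNReal.ofReal δ + volume (K ∩ Ici (m + δ)) :=
        calc volume K ≤ volume (Ico m (m + δ)) + volume (K ∩ Ici (m + δ)) :=
              (measure_mono hcover).trans (measure_union_le _ _)
          _ = _ := by rw [Real.volume_Ico, add_sub_cancel_left]
      rw [hsplit] at hvol
      exact (ENNReal.add_lt_add_iff_left ENNReal.ofReal_ne_top).mp (hvol.trans_le hle)
    obtain ⟨z, hzK, hz⟩ := ih (hK.inter_right isClosed_Ici) hvol'
    refine ⟨Fin.cases m z, Fin.cases hm fun i => (hzK i).1, fun i j hij => ?_⟩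
    induction j using Fin.cases with
    | zero => exact absurd hij (Fin.not_lt_zero i)
    | succ j =>
      induction i using Fin.cases with
      | zero => simpa using (hzK j).2
      | succ i => simpa using hz i j (Fin.succ_lt_succ_iff.mp hij)

lemma MeasurableSet.exists_separated_of_lt_volume {s : Set ℝ} (hs : MeasurableSet s) {δ : ℝ}
    (hδ : 0 < δ) {n : ℕ} (hvol : ENNReal.ofReal (n * δ) < volume s) :
    ∃ z : Fin (n + 1) → ℝ, (∀ i, z i ∈ s) ∧ ∀ i j, i < j → z i + δ ≤ z j := by
  obtain ⟨K, hKs, hK, hvolK⟩ := hs.exists_lt_isCompact hvol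
  obtain ⟨z, hzK, hz⟩ := hK.exists_separated_of_lt_volume hδ hvolK
  exact ⟨z, fun i => hKs (hzK i), hz⟩

lemma exists_separated_of_lt_volume_closure {T : Set ℝ} {δ : ℝ} (hδ : 0 < δ) {n : ℕ}
    (hvol : ENNReal.ofReal (n * δ) < volume (closure T)) :
    ∃ w : Fin (n + 1) → ℝ, (∀ i, w i ∈ T) ∧ ∀ i j, i ≠ j → δ / 2 ≤ |w i - w j| := by
  obtain ⟨z, hzT, hz⟩ := isClosed_closure.measurableSet.exists_separated_of_lt_volume hδ hvol
  have happrox : ∀ i, ∃ w ∈ T, dist (z i) w < δ / 4 := fun i =>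
    Metric.mem_closure_iff.mp (hzT i) _ (by positivity)
  choose w hwT hwz using happrox
  refine ⟨w, hwT, fun i j hij => ?_⟩
  have hzij : δ ≤ dist (z i) (z j) := by
    rw [Real.dist_eq]
    rcases hij.lt_or_gt with h | h
    · rw [abs_sub_comm, abs_of_nonneg] <;> linarith [hz i j h]
    · rw [abs_of_nonneg] <;> linarith [hz j i h]
  have htri := dist_triangle4 (z i) (w i) (w j) (z j)
  rw [dist_comm (w j)] at htri
  rw [← Real.dist_eq]
  linarith [hwz i, hwz j]

lemma tendsto_nat_mul_rpow_div_atTop {α c : ℝ} (hα : α < 1) (hc : 0 < c) :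
    Tendsto (fun N : ℕ => (N : ℝ) * (c / N) ^ α) atTop atTop := by
  have hpow : Tendsto (fun N : ℕ => (N : ℝ) ^ (1 - α) * c ^ α) atTop atTop :=
    ((tendsto_rpow_atTop (by linarith)).comp tendsto_natCast_atTop_atTop).atTop_mul_const
      (by positivity)
  refine hpow.congr' ((eventually_gt_atTop 0).mono fun N hN => ?_)
  have hN' : (0 : ℝ) < N := Nat.cast_pos.mpr hN
  show _ = (N : ℝ) * (c / N) ^ α
  rw [Real.div_rpow hc.le hN'.le, Real.rpow_sub hN', Real.rpow_one]
  field_simp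

theorem stmt6_general {α : ℝ} (hα : α ∈ Set.Ioo (0:ℝ) 1) {A : Set ℝ}
    {f : ℝ → ℝ} (hV : fracVar α f A < ⊤) :
    volume (closure (f '' A)) = 0 := by
  by_contra h0
  obtain ⟨L, -, hL_pos, hL⟩ := ENNReal.lt_iff_exists_real_btwn.mp (pos_iff_ne_zero.mpr h0)
  have hL0 : 0 < L := ENNReal.ofReal_pos.mp hL_pos
  have hbound : ∀ N : ℕ, 0 < N → (N : ℝ) * (L / 2 / N) ^ α ≤ (fracVar α f A).toReal := by
    intro N hN
    have hN' : (0 : ℝ) < N := Nat.cast_pos.mpr hN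
    have hvol : ENNReal.ofReal (N * (L / N)) < volume (closure (f '' A)) := by
      rwa [mul_div_cancel₀ L hN'.ne']
    obtain ⟨w, hwA, hw⟩ := exists_separated_of_lt_volume_closure (div_pos hL0 hN') hvol
    choose x hxA hfx using hwA
    have hsep : ∀ i j, i ≠ j → L / 2 / N ≤ |f (x i) - f (x j)| := by
      simpa only [hfx, div_right_comm L (N : ℝ) 2] using hw
    exact (ENNReal.ofReal_le_iff_le_toReal hV.ne).mp
      (ofReal_nat_mul_rpow_le_fracVar hα.1.le (by positivity) x hxA hsep)
  have hunbounded := tendsto_nat_mul_rpow_div_atTop hα.2 (half_pos hL0)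
  obtain ⟨N, hNV, hN⟩ :=
    ((hunbounded.eventually_gt_atTop (fracVar α f A).toReal).and (eventually_gt_atTop 0)).exists
  exact (hbound N hN).not_gt hNV

/-- If `α ∈ (0,1)`, `A ⊆ ℝ` is bounded, and `f : A → ℝ` is uniformly
continuous with `V_α(f,A) < ∞`, then the closure of `f(A)` has Lebesgue measure zero. -/
theorem stmt6 {α : ℝ} (hα : α ∈ Set.Ioo (0:ℝ) 1) {A : Set ℝ}
    (hA : Bornology.IsBounded A) {f : ℝ → ℝ} (hf : UniformContinuousOn f A)
    (hV : fracVar α f A < ⊤) :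
    volume (closure (f '' A)) = 0 :=
  stmt6_general hα hV
end

section
/- Let h_m:[a,b]→[c_m,d_m] (m in a subset M of ℕ) be continuous increasing functions such that Σ_{m∈M} h_m(x) < ∞ for all x∈[a,b]. Let K⊂[a,b] be a closed set such that λ(h_m(K))=0 for all m∈M. Then the function h:[a,b]→ℝ defined by h(x):=Σ_{m∈M} h_m(x) is continuous and increasing, and λ(h(K))=0. -/
/-!
For a nonempty compact `K` with extreme points `u ≤ v`, the gaps of `K` (bounded components
`(e₁, e₂)` of its complement) are countably many disjoint intervals. If `φ` is continuous and
increasing, `[φ u, φ v] = φ [u, v]` is, up to countably many points, the disjoint union of `φ K`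
and the intervals `(φ e₁, φ e₂)`, so `λ(φ K) + Σ_gaps (φ e₂ - φ e₁) = φ v - φ u`.
Apart from `λ(φ K)` every term of this identity is additive in `φ`. Summing the identities for
the `h_m`, where `λ(h_m K) = 0`, and exchanging the two sums yields the identity for `h` without
its first term, hence `λ(h K) = 0`. Continuity of `h` is the Weierstrass M-test with the bound
`|h_m| ≤ |h_m a| + |h_m b|`.
-/

open Set MeasureTheory
open scoped ENNReal NNReal

def gaps (K : Set ℝ) : Set (ℝ × ℝ) :=
  {e | e.1 ∈ K ∧ e.2 ∈ K ∧ e.1 < e.2 ∧ Disjoint (Ioo e.1 e.2) K}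

section Gaps

variable {K : Set ℝ}

lemma snd_le_of_mem_gaps {e : ℝ × ℝ} (he : e ∈ gaps K) {k : ℝ} (hk : k ∈ K) (hlt : e.1 < k) :
    e.2 ≤ k :=
  not_lt.1 fun hk' => he.2.2.2.ne_of_mem ⟨hlt, hk'⟩ hk rfl

lemma le_or_le_of_mem_gaps {e e' : ℝ × ℝ} (he : e ∈ gaps K) (he' : e' ∈ gaps K) (hne : e ≠ e') :
    e.2 ≤ e'.1 ∨ e'.2 ≤ e.1 := by
  rcases lt_trichotomy e.1 e'.1 with hlt | heq | hgt
  · exact .inl (snd_le_of_mem_gaps he he'.1 hlt)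
  · refine absurd (Prod.ext heq (le_antisymm ?_ ?_)) hne
    · exact snd_le_of_mem_gaps he he'.2.1 (heq ▸ he'.2.2.1)
    · exact snd_le_of_mem_gaps he' he.2.1 (heq ▸ he.2.2.1)
  · exact .inr (snd_le_of_mem_gaps he' he.1 hgt)

lemma MonotoneOn.pairwiseDisjoint_Ioo_gaps {s : Set ℝ} {φ : ℝ → ℝ} (hφ : MonotoneOn φ s)
    (hKs : K ⊆ s) : (gaps K).PairwiseDisjoint fun e => Ioo (φ e.1) (φ e.2) := by
  intro e he e' he' hne
  rcases le_or_le_of_mem_gaps he he' hne with hle | hle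
  · exact (Iic_disjoint_Ioi (hφ (hKs he.2.1) (hKs he'.1) hle)).mono
      (Ioo_subset_Iio_self.trans Iio_subset_Iic_self) Ioo_subset_Ioi_self
  · exact (Iic_disjoint_Ioi (hφ (hKs he'.2.1) (hKs he.1) hle)).symm.mono
      Ioo_subset_Ioi_self (Ioo_subset_Iio_self.trans Iio_subset_Iic_self)

lemma countable_gaps (K : Set ℝ) : (gaps K).Countable :=
  (monotoneOn_id.pairwiseDisjoint_Ioo_gaps (subset_univ K)).countable_of_isOpen
    (fun _ _ => isOpen_Ioo) fun _ he => nonempty_Ioo.2 he.2.2.1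

lemma IsCompact.exists_mem_gaps (hK : IsCompact K) (hne : K.Nonempty) {x : ℝ}
    (hx : x ∈ Icc (sInf K) (sSup K)) (hxK : x ∉ K) : ∃ e ∈ gaps K, x ∈ Ioo e.1 e.2 := by
  have hl : sSup (K ∩ Iic x) ∈ K ∩ Iic x :=
    (hK.inter_right isClosed_Iic).sSup_mem ⟨_, hK.sInf_mem hne, hx.1⟩
  have hr : sInf (K ∩ Ici x) ∈ K ∩ Ici x :=
    (hK.inter_right isClosed_Ici).sInf_mem ⟨_, hK.sSup_mem hne, hx.2⟩
  have hxl : sSup (K ∩ Iic x) < x := hl.2.lt_of_ne fun h => hxK (h ▸ hl.1)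
  have hxr : x < sInf (K ∩ Ici x) := hr.2.lt_of_ne' fun h => hxK (h ▸ hr.1)
  refine ⟨(sSup (K ∩ Iic x), sInf (K ∩ Ici x)), ⟨hl.1, hr.1, hxl.trans hxr, ?_⟩, hxl, hxr⟩
  refine disjoint_left.2 fun z hz hzK => ?_
  rcases le_total z x with hzx | hxz
  · exact hz.1.not_ge (le_csSup (hK.bddAbove.mono inter_subset_left) ⟨hzK, hzx⟩)
  · exact hz.2.not_ge (csInf_le (hK.bddBelow.mono inter_subset_left) ⟨hzK, hxz⟩)

lemma IsCompact.volume_image_add_tsum_gaps (hK : IsCompact K) (hne : K.Nonempty) {φ : ℝ → ℝ}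
    (hcont : ContinuousOn φ (Icc (sInf K) (sSup K)))
    (hmono : MonotoneOn φ (Icc (sInf K) (sSup K))) :
    volume (φ '' K) + ∑' e : gaps K, ENNReal.ofReal (φ e.1.2 - φ e.1.1) =
      ENNReal.ofReal (φ (sSup K) - φ (sInf K)) := by
  set u := sInf K
  set v := sSup K
  have hKuv : K ⊆ Icc u v := fun x hx => ⟨csInf_le hK.bddBelow hx, le_csSup hK.bddAbove hx⟩
  have huv : u ≤ v := (hKuv hne.some_mem).1.trans (hKuv hne.some_mem).2
  have hmem (e) (he : e ∈ gaps K) : e.1 ∈ Icc u v ∧ e.2 ∈ Icc u v := ⟨hKuv he.1, hKuv he.2.1⟩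
  set W := ⋃ e ∈ gaps K, Ioo (φ e.1) (φ e.2)
  set N := ⋃ e ∈ gaps K, ({φ e.1, φ e.2} : Set ℝ)
  have hW : volume W = ∑' e : gaps K, ENNReal.ofReal (φ e.1.2 - φ e.1.1) := by
    rw [measure_biUnion (countable_gaps K) (hmono.pairwiseDisjoint_Ioo_gaps hKuv)
      fun _ _ => measurableSet_Ioo]
    exact tsum_congr fun _ => Real.volume_Ioo
  have hN : volume N = 0 :=
    ((countable_gaps K).biUnion fun _ _ => (countable_singleton _).insert _).measure_zero _
  have hdisj : Disjoint (φ '' K) W := by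
    refine disjoint_left.2 ?_
    rintro _ ⟨x, hxK, rfl⟩ hxW
    obtain ⟨e, he, hxe⟩ := mem_iUnion₂.1 hxW
    have h1 : e.1 < x := not_le.1 fun h => hxe.1.not_ge (hmono (hKuv hxK) (hmem e he).1 h)
    have h2 : x < e.2 := not_le.1 fun h => hxe.2.not_ge (hmono (hmem e he).2 (hKuv hxK) h)
    exact he.2.2.2.ne_of_mem ⟨h1, h2⟩ hxK rfl
  have hsub : φ '' K ∪ W ⊆ Icc (φ u) (φ v) := by
    refine union_subset ((image_mono hKuv).trans hmono.image_Icc_subset) (iUnion₂_subset ?_)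
    intro e he
    exact Ioo_subset_Icc_self.trans (Icc_subset_Icc
      (hmono (left_mem_Icc.2 huv) (hmem e he).1 (hmem e he).1.1)
      (hmono (hmem e he).2 (right_mem_Icc.2 huv) (hmem e he).2.2))
  have hcover : Icc (φ u) (φ v) ⊆ φ '' K ∪ W ∪ N := by
    intro y hy
    obtain ⟨x, hx, rfl⟩ := hcont.surjOn_Icc (left_mem_Icc.2 huv) (right_mem_Icc.2 huv) hy
    by_cases hxK : x ∈ K
    · exact .inl (.inl (mem_image_of_mem φ hxK))
    obtain ⟨e, he, hxe⟩ := hK.exists_mem_gaps hne hx hxK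
    rcases (hmono (hmem e he).1 hx hxe.1.le).eq_or_lt with h1 | h1
    · exact .inr (mem_biUnion he (.inl h1.symm))
    rcases (hmono hx (hmem e he).2 hxe.2.le).eq_or_lt with h2 | h2
    · exact .inr (mem_biUnion he (.inr h2))
    exact .inl (.inr (mem_biUnion he ⟨h1, h2⟩))
  have hW_meas : MeasurableSet W :=
    (isOpen_biUnion fun _ _ => isOpen_Ioo).measurableSet
  rw [← hW, ← measure_union hdisj hW_meas, ← Real.volume_Icc]
  refine le_antisymm (measure_mono hsub) ?_
  calc volume (Icc (φ u) (φ v)) ≤ volume (φ '' K ∪ W ∪ N) := measure_mono hcover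
    _ ≤ volume (φ '' K ∪ W) + volume N := measure_union_le _ _
    _ = volume (φ '' K ∪ W) := by rw [hN, add_zero]

end Gaps

section Tsum

variable {ι : Type*} {f : ι → ℝ → ℝ}

lemma monotoneOn_tsum {s : Set ℝ} (hmono : ∀ i, MonotoneOn (f i) s)
    (hsum : ∀ x ∈ s, Summable fun i => f i x) : MonotoneOn (fun x => ∑' i, f i x) s :=
  fun x hx y hy hxy => Summable.tsum_le_tsum (fun i => hmono i hx hy hxy) (hsum x hx) (hsum y hy)

lemma continuousOn_tsum_of_monotoneOn {a b : ℝ} (hab : a ≤ b)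
    (hcont : ∀ i, ContinuousOn (f i) (Icc a b)) (hmono : ∀ i, MonotoneOn (f i) (Icc a b))
    (hsum : ∀ x ∈ Icc a b, Summable fun i => f i x) :
    ContinuousOn (fun x => ∑' i, f i x) (Icc a b) := by
  refine continuousOn_tsum hcont
    ((hsum a (left_mem_Icc.2 hab)).abs.add (hsum b (right_mem_Icc.2 hab)).abs) fun i x hx => ?_
  have hax := hmono i (left_mem_Icc.2 hab) hx hx.1
  have hxb := hmono i hx (right_mem_Icc.2 hab) hx.2
  rw [Real.norm_eq_abs, abs_le]
  constructor <;> linarith [neg_abs_le (f i a), le_abs_self (f i b), abs_nonneg (f i a),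
    abs_nonneg (f i b)]

lemma ofReal_tsum_sub_tsum {s : Set ℝ} (hmono : ∀ i, MonotoneOn (f i) s)
    (hsum : ∀ x ∈ s, Summable fun i => f i x) {x y : ℝ} (hx : x ∈ s) (hy : y ∈ s) (hxy : x ≤ y) :
    ENNReal.ofReal ((∑' i, f i y) - ∑' i, f i x) = ∑' i, ENNReal.ofReal (f i y - f i x) := by
  rw [← (hsum y hy).tsum_sub (hsum x hx)]
  exact ENNReal.ofReal_tsum_of_nonneg (fun i => sub_nonneg.2 (hmono i hx hy hxy))
    ((hsum y hy).sub (hsum x hx))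

lemma IsCompact.volume_image_tsum_eq_zero {K : Set ℝ} (hK : IsCompact K) {a b : ℝ}
    (hKs : K ⊆ Icc a b) (hcont : ∀ i, ContinuousOn (f i) (Icc a b))
    (hmono : ∀ i, MonotoneOn (f i) (Icc a b)) (hsum : ∀ x ∈ Icc a b, Summable fun i => f i x)
    (h0 : ∀ i, volume (f i '' K) = 0) : volume ((fun x => ∑' i, f i x) '' K) = 0 := by
  rcases K.eq_empty_or_nonempty with rfl | hne
  · rw [image_empty, measure_empty]
  have hu := hKs (hK.sInf_mem hne)
  have hv := hKs (hK.sSup_mem hne)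
  have hsub : Icc (sInf K) (sSup K) ⊆ Icc a b := Icc_subset_Icc hu.1 hv.2
  have hgap_identity (φ : ℝ → ℝ) (hφc : ContinuousOn φ (Icc a b)) (hφm : MonotoneOn φ (Icc a b)) :=
    hK.volume_image_add_tsum_gaps hne (hφc.mono hsub) (hφm.mono hsub)
  have hgaps : ∑' e : gaps K, ENNReal.ofReal ((∑' i, f i e.1.2) - ∑' i, f i e.1.1) =
      ENNReal.ofReal ((∑' i, f i (sSup K)) - ∑' i, f i (sInf K)) := by
    calc _ = ∑' e : gaps K, ∑' i, ENNReal.ofReal (f i e.1.2 - f i e.1.1) :=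
          tsum_congr fun e => ofReal_tsum_sub_tsum hmono hsum (hKs e.2.1) (hKs e.2.2.1) e.2.2.2.1.le
      _ = ∑' i, ∑' e : gaps K, ENNReal.ofReal (f i e.1.2 - f i e.1.1) := ENNReal.tsum_comm
      _ = ∑' i, ENNReal.ofReal (f i (sSup K) - f i (sInf K)) := tsum_congr fun i => by
          simpa only [h0 i, zero_add] using hgap_identity _ (hcont i) (hmono i)
      _ = _ := (ofReal_tsum_sub_tsum hmono hsum hu hv
          (csInf_le_csSup hne hK.bddBelow hK.bddAbove)).symm
  have hF := hgap_identity _ (continuousOn_tsum_of_monotoneOn (hu.1.trans hu.2) hcont hmono hsum)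
    (monotoneOn_tsum hmono hsum)
  rw [← hgaps] at hF
  exact (ENNReal.add_left_inj (hgaps ▸ ENNReal.ofReal_ne_top)).1 (hF.trans (zero_add _).symm)

end Tsum

theorem stmt9_general {a b : ℝ} (hab : a < b) {M : Set ℕ} {h : ℕ → ℝ → ℝ}
    (hcont : ∀ m ∈ M, ContinuousOn (h m) (Set.Icc a b))
    (hmono : ∀ m ∈ M, MonotoneOn (h m) (Set.Icc a b))
    (hsum : ∀ x ∈ Set.Icc a b, Summable (fun m : M => h (m : ℕ) x))
    {K : Set ℝ} (hK : IsClosed K) (hKs : K ⊆ Set.Icc a b)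
    (h0 : ∀ m ∈ M, volume (h m '' K) = 0) :
    ContinuousOn (fun x => ∑' m : M, h (m : ℕ) x) (Set.Icc a b) ∧
    MonotoneOn (fun x => ∑' m : M, h (m : ℕ) x) (Set.Icc a b) ∧
    volume ((fun x => ∑' m : M, h (m : ℕ) x) '' K) = 0 := by
  have hcont' (m : M) := hcont m m.2
  have hmono' (m : M) := hmono m m.2
  exact ⟨continuousOn_tsum_of_monotoneOn hab.le hcont' hmono' hsum, monotoneOn_tsum hmono' hsum,
    (isCompact_Icc.of_isClosed_subset hK hKs).volume_image_tsum_eq_zero hKs hcont' hmono' hsum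
      fun m => h0 m m.2⟩

/-- If `h_m : [a,b] → [c_m,d_m]` (`m ∈ M ⊆ ℕ`) are continuous increasing
functions with `Σ_{m∈M} h_m(x) < ∞` for all `x ∈ [a,b]`, and `K ⊆ [a,b]` is closed
with `λ(h_m(K)) = 0` for all `m ∈ M`, then `h := Σ_{m∈M} h_m` is continuous and
increasing, and `λ(h(K)) = 0`. -/
theorem stmt9 {a b : ℝ} (hab : a < b) {M : Set ℕ} {h : ℕ → ℝ → ℝ} {c d : ℕ → ℝ}
    (hcont : ∀ m ∈ M, ContinuousOn (h m) (Set.Icc a b))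
    (hmono : ∀ m ∈ M, MonotoneOn (h m) (Set.Icc a b))
    (hmap : ∀ m ∈ M, Set.MapsTo (h m) (Set.Icc a b) (Set.Icc (c m) (d m)))
    (hsum : ∀ x ∈ Set.Icc a b, Summable (fun m : M => h (m : ℕ) x))
    {K : Set ℝ} (hK : IsClosed K) (hKs : K ⊆ Set.Icc a b)
    (h0 : ∀ m ∈ M, volume (h m '' K) = 0) :
    ContinuousOn (fun x => ∑' m : M, h (m : ℕ) x) (Set.Icc a b) ∧
    MonotoneOn (fun x => ∑' m : M, h (m : ℕ) x) (Set.Icc a b) ∧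
    volume ((fun x => ∑' m : M, h (m : ℕ) x) '' K) = 0 :=
  stmt9_general hab hcont hmono hsum hK hKs h0
end

section
/- There exists a continuous function f:[0,1]→ℝ of bounded variation such that f is not VBG_{1/2}, but there exist closed sets A_m ⊂ K_f (m∈ℕ) with K_f = ∪_m A_m and V_{1/2}(f, A_m) < ∞ for every m. (Hence in the definition of VBG_{1/2} one cannot equivalently replace v_f by f, even for real-valued functions.) -/
open Set MeasureTheory
open scoped ENNReal NNReal

/-!
The example is a sum of tents over the gaps of the Cantor set `C`: over the middle-third gap of
the basic interval coded by a word `s` sits a tent of height `4^{-|s|}`. Level `n` carries `2ⁿ`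
tents of variation `2·4⁻ⁿ` each, so `f` has bounded variation; and `f` vanishes on `C`.

Away from `C` and from the peaks `f` is locally monotone, hence locally an affine function of its
own arc length, while at a peak the arc-length parametrization has slopes `1` and `-1`, and every
point of `C` is a limit of peaks. So `K_f` is `C`, on which `f` is constant, together with the
countably many peaks.

On the other hand `v_f` jumps by `2·4⁻ⁿ` across a gap of level `n`, so inside a basic interval
of level `k` the gaps of every level `n ≥ k` contribute at least `2⁻ᵏ` to `V_{1/2}(v_f, ·)`, which
is therefore infinite on every portion of `C`. By the Baire category theorem some member of any
countable closed cover of `C` contains a portion of `C`, so `f` is not `VBG_{1/2}`.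
-/

section Variation

variable {α E : Type*} [LinearOrder α]

theorem eVariationOn_add_le [SeminormedAddCommGroup E] (f g : α → E) (s : Set α) :
    eVariationOn (f + g) s ≤ eVariationOn f s + eVariationOn g s := by
  refine iSup_le fun ⟨n, u, hu, us⟩ => ?_
  calc ∑ i ∈ Finset.range n, edist ((f + g) (u (i + 1))) ((f + g) (u i))
      ≤ ∑ i ∈ Finset.range n,
          (edist (f (u (i + 1))) (f (u i)) + edist (g (u (i + 1))) (g (u i))) :=
        Finset.sum_le_sum fun i _ => edist_add_add_le _ _ _ _
    _ ≤ eVariationOn f s + eVariationOn g s := by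
        rw [Finset.sum_add_distrib]
        exact add_le_add (eVariationOn.sum_le hu us) (eVariationOn.sum_le hu us)

theorem eVariationOn_finsetSum_le [SeminormedAddCommGroup E] {ι : Type*} (t : Finset ι)
    (F : ι → α → E) (s : Set α) :
    eVariationOn (fun x => ∑ i ∈ t, F i x) s ≤ ∑ i ∈ t, eVariationOn (F i) s := by
  have h := Finset.le_sum_of_subadditive (fun φ : α → E => eVariationOn φ s)
    (eVariationOn.constant_on (subsingleton_singleton (a := (0 : E)).anti
      (image_subset_iff.2 fun _ _ => rfl))).le
    (fun φ ψ => eVariationOn_add_le φ ψ s) t F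
  rwa [Finset.sum_fn] at h

theorem eVariationOn_le_tsum [SeminormedAddCommGroup E] {F : ℕ → α → E} {f : α → E}
    {s : Set α} (hF : ∀ x ∈ s, HasSum (fun n => F n x) (f x)) :
    eVariationOn f s ≤ ∑' n, eVariationOn (F n) s := by
  by_contra! h
  obtain ⟨N, hN⟩ := (eVariationOn.lowerSemicontinuous_aux
    (fun x hx => (hF x hx).tendsto_sum_nat) h).exists
  exact (hN.trans_le (eVariationOn_finsetSum_le _ F s)).not_ge
    (ENNReal.sum_le_tsum (Finset.range N))

theorem AntitoneOn.eVariationOn_eq {f : α → ℝ} {s : Set α} {a b : α} (hf : AntitoneOn f s)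
    (as : a ∈ s) (bs : b ∈ s) :
    eVariationOn f (s ∩ Icc a b) = ENNReal.ofReal (f a - f b) := by
  have h := hf.neg.eVariationOn_eq as bs
  simp only [neg_sub_neg] at h
  rw [← h]
  simp [eVariationOn, edist_neg_neg]

theorem eVariationOn_Icc_of_monotoneOn_of_antitoneOn {f : ℝ → ℝ} {a m b : ℝ} (ham : a ≤ m)
    (hmb : m ≤ b) (hmono : MonotoneOn f (Icc a m)) (hanti : AntitoneOn f (Icc m b)) :
    eVariationOn f (Icc a b) = ENNReal.ofReal (f m - f a) + ENNReal.ofReal (f m - f b) := by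
  have h₁ := hmono.eVariationOn_eq (left_mem_Icc.2 ham) (right_mem_Icc.2 ham)
  have h₂ := hanti.eVariationOn_eq (left_mem_Icc.2 hmb) (right_mem_Icc.2 hmb)
  rw [inter_self] at h₁ h₂
  rw [← h₁, ← h₂]
  simpa using (eVariationOn.Icc_add_Icc f (s := univ) ham hmb (mem_univ m)).symm

end Variation

section ArcLength

variable {X : Type*} [NormedAddCommGroup X]

theorem vfn_self (f : ℝ → X) (a : ℝ) : vfn f a a = 0 := by
  simp [vfn, eVariationOn.subsingleton]

theorem vfn_add {f : ℝ → X} {a b c d : ℝ} (hf : BoundedVariationOn f (Icc a d))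
    (hab : a ≤ b) (hbc : b ≤ c) (hcd : c ≤ d) :
    vfn f a c = vfn f a b + (eVariationOn f (Icc b c)).toReal := by
  have hsplit := eVariationOn.Icc_add_Icc f (s := univ) hab hbc (mem_univ b)
  simp only [univ_inter] at hsplit
  rw [vfn, vfn, ← hsplit, ENNReal.toReal_add (hf.mono (Icc_subset_Icc le_rfl (hbc.trans hcd)))
    (hf.mono (Icc_subset_Icc hab hcd))]

theorem vfn_le {f : ℝ → X} {a b c : ℝ} (hf : BoundedVariationOn f (Icc a c)) (hab : a ≤ b)
    (hbc : b ≤ c) : vfn f a b ≤ vfn f a c := by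
  rw [vfn_add hf hab hbc le_rfl]
  exact le_add_of_nonneg_right ENNReal.toReal_nonneg

theorem vfn_add_of_monotoneOn {f : ℝ → ℝ} {a b c d : ℝ}
    (hf : BoundedVariationOn f (Icc a d)) (hab : a ≤ b) (hbc : b ≤ c) (hcd : c ≤ d)
    (hmono : MonotoneOn f (Icc b c)) :
    vfn f a c = vfn f a b + (f c - f b) := by
  have h := hmono.eVariationOn_eq (left_mem_Icc.2 hbc) (right_mem_Icc.2 hbc)
  rw [inter_self] at h
  rw [vfn_add hf hab hbc hcd, h,
    ENNReal.toReal_ofReal (sub_nonneg.2 (hmono (left_mem_Icc.2 hbc) (right_mem_Icc.2 hbc) hbc))]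

theorem vfn_add_of_antitoneOn {f : ℝ → ℝ} {a b c d : ℝ}
    (hf : BoundedVariationOn f (Icc a d)) (hab : a ≤ b) (hbc : b ≤ c) (hcd : c ≤ d)
    (hanti : AntitoneOn f (Icc b c)) :
    vfn f a c = vfn f a b + (f b - f c) := by
  have h := hanti.eVariationOn_eq (left_mem_Icc.2 hbc) (right_mem_Icc.2 hbc)
  rw [inter_self] at h
  rw [vfn_add hf hab hbc hcd, h,
    ENNReal.toReal_ofReal (sub_nonneg.2 (hanti (left_mem_Icc.2 hbc) (right_mem_Icc.2 hbc) hbc))]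

theorem MonotoneOn.hasC2ArcLengthParam {f : ℝ → ℝ} {c d : ℝ} (hcd : c ≤ d)
    (hmono : MonotoneOn f (Icc c d)) : HasC2ArcLengthParam f c d := by
  have hbv : BoundedVariationOn f (Icc c d) := by
    simpa using hmono.locallyBoundedVariationOn c d (left_mem_Icc.2 hcd) (right_mem_Icc.2 hcd)
  refine ⟨hbv, fun t => f c + t, ⟨fun _ => 1, fun _ => 0, fun x _ => ?_,
    fun x _ => hasDerivWithinAt_const _ _ _⟩, fun x hx => ?_⟩
  · simpa using (hasDerivWithinAt_id x _).const_add (f c)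
  · rw [vfn_add_of_monotoneOn hbv le_rfl hx.1 hx.2 (hmono.mono (Icc_subset_Icc le_rfl hx.2)),
      vfn_self]
    ring

theorem AntitoneOn.hasC2ArcLengthParam {f : ℝ → ℝ} {c d : ℝ} (hcd : c ≤ d)
    (hanti : AntitoneOn f (Icc c d)) : HasC2ArcLengthParam f c d := by
  have hbv : BoundedVariationOn f (Icc c d) := by
    rw [BoundedVariationOn, ← inter_self (Icc c d),
      hanti.eVariationOn_eq (left_mem_Icc.2 hcd) (right_mem_Icc.2 hcd)]
    exact ENNReal.ofReal_ne_top
  refine ⟨hbv, fun t => f c - t, ⟨fun _ => -1, fun _ => 0, fun x _ => ?_,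
    fun x _ => hasDerivWithinAt_const _ _ _⟩, fun x hx => ?_⟩
  · simpa using (hasDerivWithinAt_id x _).const_sub (f c)
  · rw [vfn_add_of_antitoneOn hbv le_rfl hx.1 hx.2 (hanti.mono (Icc_subset_Icc le_rfl hx.2)),
      vfn_self]
    ring

theorem not_hasDerivWithinAt_of_corner {g : ℝ → ℝ} {g' y ε : ℝ} {s : Set ℝ}
    (hε : 0 < ε) (hs : Icc (y - ε) (y + ε) ⊆ s)
    (hg : ∀ t ∈ Icc 0 ε, g (y - t) = g y - t ∧ g (y + t) = g y - t) :
    ¬ HasDerivWithinAt g g' s y := by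
  intro hderiv
  have hright : HasDerivWithinAt (fun x => g y - (x - y)) g' (Icc y (y + ε)) y := by
    refine (hderiv.mono ((Icc_subset_Icc (by linarith) le_rfl).trans hs)).congr_of_mem
      (fun x hx => ?_) (left_mem_Icc.2 (by linarith))
    have := (hg (x - y) ⟨by linarith [hx.1], by linarith [hx.2]⟩).2
    rw [add_sub_cancel] at this
    exact this.symm
  have hleft : HasDerivWithinAt (fun x => g y + (x - y)) g' (Icc (y - ε) y) y := by
    refine (hderiv.mono ((Icc_subset_Icc le_rfl (by linarith)).trans hs)).congr_of_mem
      (fun x hx => ?_) (right_mem_Icc.2 (by linarith))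
    have := (hg (y - x) ⟨by linarith [hx.2], by linarith [hx.1]⟩).1
    rw [sub_sub_cancel] at this
    rw [this]; ring
  have h₁ : g' = -1 :=
    ((uniqueDiffOn_Icc (by linarith)) y (left_mem_Icc.2 (by linarith))).eq_deriv _ hright
      (by simpa using ((hasDerivWithinAt_id y _).sub_const y).const_sub (g y))
  have h₂ : g' = 1 :=
    ((uniqueDiffOn_Icc (by linarith)) y (right_mem_Icc.2 (by linarith))).eq_deriv _ hleft
      (by simpa using ((hasDerivWithinAt_id y _).sub_const y).const_add (g y))
  linarith

theorem vfn_eq_of_corner {f : ℝ → ℝ} {A B m δ k : ℝ} (hbv : BoundedVariationOn f (Icc A B))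
    (hk : 0 ≤ k) (hA : A ≤ m - δ) (hB : m + δ ≤ B)
    (hf : ∀ τ ∈ Icc 0 δ, f (m - τ) = f m - k * τ ∧ f (m + τ) = f m - k * τ) {τ : ℝ}
    (hτ : τ ∈ Icc 0 δ) :
    vfn f A (m - τ) = vfn f A m - k * τ ∧ vfn f A (m + τ) = vfn f A m + k * τ := by
  have hleft : ∀ x ∈ Icc (m - δ) m, f x = f m - k * (m - x) := fun x hx => by
    simpa using (hf (m - x) ⟨by linarith [hx.2], by linarith [hx.1]⟩).1
  have hright : ∀ x ∈ Icc m (m + δ), f x = f m - k * (x - m) := fun x hx => by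
    simpa using (hf (x - m) ⟨by linarith [hx.1], by linarith [hx.2]⟩).2
  have hmono : MonotoneOn f (Icc (m - δ) m) := fun x hx x' hx' hxx' => by
    rw [hleft x hx, hleft x' hx']
    nlinarith
  have hanti : AntitoneOn f (Icc m (m + δ)) := fun x hx x' hx' hxx' => by
    rw [hright x hx, hright x' hx']
    nlinarith
  obtain ⟨hτ₀, hτδ⟩ := hτ
  constructor
  · have := vfn_add_of_monotoneOn hbv (b := m - τ) (c := m) (by linarith) (by linarith)
      (by linarith) (hmono.mono (Icc_subset_Icc (by linarith) le_rfl))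
    rw [(hf τ ⟨hτ₀, hτδ⟩).1] at this
    linarith
  · have := vfn_add_of_antitoneOn hbv (b := m) (c := m + τ) (by linarith) (by linarith)
      (by linarith) (hanti.mono (Icc_subset_Icc le_rfl (by linarith)))
    rw [(hf τ ⟨hτ₀, hτδ⟩).2] at this
    linarith

theorem not_hasC2ArcLengthParam_of_corner {f : ℝ → ℝ} {A B m δ k : ℝ} (hk : 0 < k)
    (hδ : 0 < δ) (hA : A ≤ m - δ) (hB : m + δ ≤ B)
    (hf : ∀ τ ∈ Icc 0 δ, f (m - τ) = f m - k * τ ∧ f (m + τ) = f m - k * τ) :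
    ¬ HasC2ArcLengthParam f A B := by
  rintro ⟨hbv, g, ⟨g', -, hg', -⟩, hgf⟩
  set y := vfn f A m
  have hv := fun τ (hτ : τ ∈ Icc 0 δ) => vfn_eq_of_corner hbv hk.le hA hB hf hτ
  have hmem : Icc (y - k * δ) (y + k * δ) ⊆ Icc 0 (vfn f A B) := by
    refine Icc_subset_Icc ?_ ?_
    · rw [← (hv δ ⟨hδ.le, le_rfl⟩).1]
      exact ENNReal.toReal_nonneg
    · rw [← (hv δ ⟨hδ.le, le_rfl⟩).2]
      exact vfn_le hbv (by linarith) hB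
  have hy : y ∈ Icc (y - k * δ) (y + k * δ) := ⟨by nlinarith, by nlinarith⟩
  -- along the arc-length parameter, `g` climbs to `g y = f m` with slope `1` and descends with `-1`
  refine not_hasDerivWithinAt_of_corner (mul_pos hk hδ) hmem (fun t ht => ?_) (hg' y (hmem hy))
  have hτ : t / k ∈ Icc 0 δ :=
    ⟨div_nonneg ht.1 hk.le, (div_le_iff₀ hk).2 (by linarith [ht.2])⟩
  have hgy : g y = f m := hgf m ⟨by linarith, by linarith⟩
  obtain ⟨hvl, hvr⟩ := hv _ hτ
  obtain ⟨hfl, hfr⟩ := hf _ hτ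
  rw [mul_div_cancel₀ t hk.ne'] at hvl hvr hfl hfr
  rw [hgy, ← hvl, ← hvr, hgf _ ⟨by linarith [hτ.2], by linarith [hτ.1]⟩,
    hgf _ ⟨by linarith [hτ.1], by linarith [hτ.2]⟩, hfl, hfr]
  exact ⟨rfl, rfl⟩

end ArcLength

section FracVar

variable {α : ℝ} {g : ℝ → ℝ} {K : Set ℝ}

theorem fracVar_eq_zero_of_subsingleton (hα : α ≠ 0) (hg : (g '' K).Subsingleton) :
    fracVar α g K = 0 := by
  refine le_antisymm (iSup_le fun m => iSup_le fun p => iSup_le fun hp => iSup_le fun _ => ?_)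
    zero_le
  refine (Finset.sum_eq_zero fun i _ => ?_).le
  rw [hg (mem_image_of_mem g (hp i).2.1) (mem_image_of_mem g (hp i).1), sub_self, abs_zero,
    Real.zero_rpow hα, ENNReal.ofReal_zero]

theorem sum_le_fracVar_s12 {ι : Type*} (I : Finset ι) {a b : ι → ℝ} (ha : ∀ i ∈ I, a i ∈ K)
    (hb : ∀ i ∈ I, b i ∈ K) (hab : ∀ i ∈ I, a i < b i)
    (hdisj : (I : Set ι).PairwiseDisjoint fun i => Ioo (a i) (b i)) :
    ∑ i ∈ I, ENNReal.ofReal (|g (b i) - g (a i)| ^ α) ≤ fracVar α g K := by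
  classical
  have hsep : ∀ i ∈ I, ∀ j ∈ I, i ≠ j → b i ≤ a j ∨ b j ≤ a i := by
    intro i hi j hj hij
    have h := Ioo_disjoint_Ioo.1 (hdisj hi hj hij)
    rcases min_le_iff.1 h with h' | h' <;> rcases le_max_iff.1 h' with h'' | h''
    all_goals first | exact .inl h'' | exact .inr h'' | (exfalso; linarith [hab i hi, hab j hj])
  have hinj : Set.InjOn a I := by
    intro i hi j hj hij
    by_contra hne
    rcases hsep i hi j hj hne with h | h <;> linarith [hab i hi, hab j hj]
  -- list the intervals in increasing order of their left endpoints
  let e := (I.image a).orderIsoOfFin rfl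
  choose idx hidx hidxa using fun k => Finset.mem_image.1 (e k).2
  have hsum : ∑ k, ENNReal.ofReal (|g (b (idx k)) - g (a (idx k))| ^ α)
      = ∑ i ∈ I, ENNReal.ofReal (|g (b i) - g (a i)| ^ α) := by
    refine Finset.sum_bij (fun k _ => idx k) (fun k _ => hidx k) (fun k _ k' _ h => ?_)
      (fun i hi => ?_) fun _ _ => rfl
    · exact e.injective (Subtype.ext (by rw [← hidxa, ← hidxa, h]))
    · obtain ⟨k, hk⟩ := e.surjective ⟨a i, Finset.mem_image_of_mem a hi⟩
      exact ⟨k, Finset.mem_univ _, hinj (hidx k) hi (by rw [hidxa, hk])⟩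
  rw [← hsum]
  refine le_iSup_of_le _ (le_iSup_of_le (fun k => (a (idx k), b (idx k)))
    (le_iSup_of_le (fun k => ⟨ha _ (hidx k), hb _ (hidx k), (hab _ (hidx k)).le⟩)
    (le_iSup_of_le (fun k k' hkk' => ?_) le_rfl)))
  have hlt : a (idx k) < a (idx k') := by
    rw [hidxa, hidxa]
    exact e.strictMono hkk'
  rcases hsep _ (hidx k) _ (hidx k') (fun h => hlt.ne (congrArg a h)) with h | h
  · exact h
  · linarith [hab _ (hidx k')]

end FracVar

theorem IsClosed.exists_inter_ball_subset_of_subset_iUnion {X : Type*} [MetricSpace X]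
    [CompleteSpace X] {C : Set X} (hC : IsClosed C) (hne : C.Nonempty) {A : ℕ → Set X}
    (hA : ∀ m, IsClosed (A m)) (hcover : C ⊆ ⋃ m, A m) :
    ∃ m, ∃ x ∈ C, ∃ ε > 0, C ∩ Metric.ball x ε ⊆ A m := by
  have : CompleteSpace C := hC.completeSpace_coe
  have : Nonempty C := hne.to_subtype
  obtain ⟨m, x, hx⟩ := nonempty_interior_of_iUnion_of_closed
    (fun m => (hA m).preimage continuous_subtype_val)
    (eq_univ_of_forall fun x => by simpa using hcover x.2)
  obtain ⟨ε, hε, hball⟩ := Metric.mem_nhds_iff.1 (mem_interior_iff_mem_nhds.1 hx)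
  exact ⟨m, x, x.2, ε, hε, fun y ⟨hyC, hy⟩ =>
    hball (show (⟨y, hyC⟩ : C) ∈ Metric.ball x ε from hy)⟩

section Tent

noncomputable def tentFun (m w h x : ℝ) : ℝ := max 0 (h - h / w * |x - m|)

variable {m w h : ℝ}

theorem tentFun_nonneg (x : ℝ) : 0 ≤ tentFun m w h x := le_max_left _ _

theorem tentFun_le (hw : 0 < w) (hh : 0 ≤ h) (x : ℝ) : tentFun m w h x ≤ h :=
  max_le hh (by have := abs_nonneg (x - m); have := div_nonneg hh hw.le; nlinarith)

theorem tentFun_eq_zero (hw : 0 < w) (hh : 0 ≤ h) {x : ℝ} (hx : x ∉ Ioo (m - w) (m + w)) :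
    tentFun m w h x = 0 := by
  have hxm : w ≤ |x - m| := by
    rw [mem_Ioo, not_and_or, not_lt, not_lt] at hx
    rcases hx with hx | hx
    · rw [abs_sub_comm, abs_of_nonneg (by linarith)]; linarith
    · rw [abs_of_nonneg (by linarith)]; linarith
  refine max_eq_left (sub_nonpos.2 ?_)
  calc h = h / w * w := (div_mul_cancel₀ h hw.ne').symm
    _ ≤ h / w * |x - m| := mul_le_mul_of_nonneg_left hxm (div_nonneg hh hw.le)

theorem tentFun_sub (hw : 0 < w) (hh : 0 ≤ h) {τ : ℝ} (hτ : τ ∈ Icc 0 w) :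
    tentFun m w h (m - τ) = h - h / w * τ := by
  rw [tentFun, sub_sub_cancel_left, abs_neg, abs_of_nonneg hτ.1]
  refine max_eq_right (sub_nonneg.2 ?_)
  calc h / w * τ ≤ h / w * w := mul_le_mul_of_nonneg_left hτ.2 (div_nonneg hh hw.le)
    _ = h := div_mul_cancel₀ h hw.ne'

theorem tentFun_add (hw : 0 < w) (hh : 0 ≤ h) {τ : ℝ} (hτ : τ ∈ Icc 0 w) :
    tentFun m w h (m + τ) = h - h / w * τ := by
  rw [← tentFun_sub (m := m) hw hh hτ, tentFun, tentFun, add_sub_cancel_left,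
    sub_sub_cancel_left, abs_neg]

theorem tentFun_self (hw : 0 < w) (hh : 0 ≤ h) : tentFun m w h m = h := by
  simpa using tentFun_sub (m := m) hw hh ⟨le_rfl, hw.le⟩

theorem continuous_tentFun : Continuous (tentFun m w h) := by
  unfold tentFun; fun_prop

theorem monotoneOn_tentFun (hw : 0 < w) (hh : 0 ≤ h) : MonotoneOn (tentFun m w h) (Iic m) := by
  intro x hx y hy hxy
  simp only [tentFun]
  rw [abs_of_nonpos (sub_nonpos.2 hx), abs_of_nonpos (sub_nonpos.2 hy)]
  exact max_le_max le_rfl (by have := div_nonneg hh hw.le; nlinarith)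

theorem antitoneOn_tentFun (hw : 0 < w) (hh : 0 ≤ h) : AntitoneOn (tentFun m w h) (Ici m) := by
  intro x hx y hy hxy
  simp only [tentFun]
  rw [abs_of_nonneg (sub_nonneg.2 (show m ≤ x from hx)),
    abs_of_nonneg (sub_nonneg.2 (show m ≤ y from hy))]
  exact max_le_max le_rfl (by have := div_nonneg hh hw.le; nlinarith)

theorem eVariationOn_tentFun_le (hw : 0 < w) (hh : 0 ≤ h) {a b : ℝ} (ham : a ≤ m)
    (hmb : m ≤ b) :
    eVariationOn (tentFun m w h) (Icc a b) ≤ ENNReal.ofReal (2 * h) := by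
  rw [eVariationOn_Icc_of_monotoneOn_of_antitoneOn ham hmb
    ((monotoneOn_tentFun hw hh).mono fun x hx => hx.2)
    ((antitoneOn_tentFun hw hh).mono fun x hx => hx.1), tentFun_self hw hh,
    ← ENNReal.ofReal_add (sub_nonneg.2 (tentFun_le hw hh a)) (sub_nonneg.2 (tentFun_le hw hh b))]
  have ha : 0 ≤ tentFun m w h a := tentFun_nonneg a
  have hb : 0 ≤ tentFun m w h b := tentFun_nonneg b
  exact ENNReal.ofReal_le_ofReal (by linarith)

end Tent

namespace CantorTent

noncomputable def digit (b : Bool) : ℝ := if b then 2 else 0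

theorem digit_eq_of_mem_Icc {x : ℝ} {b c : Bool} (hb : 3 * x - digit b ∈ Icc 0 1)
    (hc : 3 * x - digit c ∈ Icc 0 1) : b = c := by
  cases b <;> cases c <;> simp only [digit, mem_Icc] at hb hc <;> norm_num at hb hc ⊢ <;> linarith

theorem three_mul_sub_digit_notMem_Icc {x : ℝ} (hx : x ∈ Ioo (1 / 3) (2 / 3)) (b : Bool) :
    3 * x - digit b ∉ Icc 0 1 := by
  obtain ⟨h₁, h₂⟩ := hx
  cases b <;> simp only [digit, mem_Icc] <;> norm_num <;> intro <;> linarith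

theorem exists_digit {x : ℝ} (hx : x ∈ Icc 0 1) (hmid : x ∉ Ioo (1 / 3) (2 / 3)) :
    ∃ b, 3 * x - digit b ∈ Icc 0 1 := by
  obtain ⟨h₀, h₁⟩ := hx
  rcases le_or_gt x (1 / 3) with h | h
  · exact ⟨false, by simp only [digit, mem_Icc]; norm_num; constructor <;> linarith⟩
  · have : 2 / 3 ≤ x := by_contra fun h' => hmid ⟨h, not_le.1 h'⟩
    exact ⟨true, by simp only [digit, mem_Icc]; norm_num; constructor <;> linarith⟩

theorem mem_image_union_iff {T : Set ℝ} {x : ℝ} :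
    x ∈ (· / 3) '' T ∪ (fun y => (2 + y) / 3) '' T ↔ ∃ b, 3 * x - digit b ∈ T := by
  constructor
  · rintro (⟨y, hy, rfl⟩ | ⟨y, hy, rfl⟩)
    · exact ⟨false, by convert hy using 1; simp [digit]; ring⟩
    · exact ⟨true, by convert hy using 1; simp [digit]; ring⟩
  · rintro ⟨b, hb⟩
    cases b
    · exact Or.inl ⟨_, hb, by simp [digit]⟩
    · exact Or.inr ⟨_, hb, by simp [digit]⟩

theorem mem_preCantorSet_succ_iff {n : ℕ} {x : ℝ} :
    x ∈ preCantorSet (n + 1) ↔ ∃ b, 3 * x - digit b ∈ preCantorSet n := by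
  rw [preCantorSet_succ, mem_image_union_iff]

theorem mem_cantorSet_iff {x : ℝ} : x ∈ cantorSet ↔ ∃ b, 3 * x - digit b ∈ cantorSet := by
  conv_lhs => rw [cantorSet_eq_union_halves]
  exact mem_image_union_iff

theorem one_mem_cantorSet : (1 : ℝ) ∈ cantorSet := by
  refine mem_iInter.2 fun n => ?_
  induction n with
  | zero => simp
  | succ n ih => exact mem_preCantorSet_succ_iff.2 ⟨true, by norm_num [digit, ih]⟩

/-- `wordMap s` is the similarity of ratio `3^{-|s|}` mapping `[0, 1]` onto the basic interval of
the Cantor construction coded by `s`, leading ternary digit first (`true ↦ 2`, `false ↦ 0`). -/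
noncomputable def wordMap : List Bool → ℝ → ℝ
  | [], x => x
  | b :: s, x => (digit b + wordMap s x) / 3

@[simp] theorem wordMap_nil (x : ℝ) : wordMap [] x = x := rfl

@[simp] theorem wordMap_cons (b : Bool) (s : List Bool) (x : ℝ) :
    wordMap (b :: s) x = (digit b + wordMap s x) / 3 := rfl

theorem wordMap_sub (s : List Bool) (x y : ℝ) :
    wordMap s y - wordMap s x = 3⁻¹ ^ s.length * (y - x) := by
  induction s with
  | nil => simp
  | cons b s ih =>
    simp only [wordMap_cons, List.length_cons, pow_succ]
    linear_combination ih / 3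

theorem wordMap_append (s t : List Bool) (x : ℝ) :
    wordMap (s ++ t) x = wordMap s (wordMap t x) := by
  induction s with
  | nil => rfl
  | cons b s ih => simp [ih]

theorem wordMap_mem_cantorSet (s : List Bool) {x : ℝ} (hx : x ∈ cantorSet) :
    wordMap s x ∈ cantorSet := by
  induction s with
  | nil => exact hx
  | cons b s ih => exact mem_cantorSet_iff.2 ⟨b, by simpa [mul_div_cancel₀] using ih⟩

theorem exists_wordMap_eq {x : ℝ} (hx : x ∈ cantorSet) (n : ℕ) :
    ∃ s : List Bool, s.length = n ∧ ∃ y ∈ cantorSet, wordMap s y = x := by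
  induction n generalizing x with
  | zero => exact ⟨[], rfl, x, hx, rfl⟩
  | succ n ih =>
    obtain ⟨b, hb⟩ := mem_cantorSet_iff.1 hx
    obtain ⟨s, hs, y, hy, hsy⟩ := ih hb
    exact ⟨b :: s, by simp [hs], y, hy, by simp [hsy]⟩

noncomputable def gapLeft (s : List Bool) : ℝ := wordMap s (1 / 3)

noncomputable def gapRight (s : List Bool) : ℝ := wordMap s (2 / 3)

noncomputable def gapMid (s : List Bool) : ℝ := wordMap s (1 / 2)

noncomputable def halfWidth (s : List Bool) : ℝ := 3⁻¹ ^ s.length / 6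

def gap (s : List Bool) : Set ℝ := Ioo (gapLeft s) (gapRight s)

theorem halfWidth_pos (s : List Bool) : 0 < halfWidth s := by
  unfold halfWidth; positivity

theorem gapLeft_eq (s : List Bool) : gapLeft s = gapMid s - halfWidth s := by
  have := wordMap_sub s (1 / 3) (1 / 2)
  rw [gapLeft, gapMid, halfWidth]
  linarith

theorem gapRight_eq (s : List Bool) : gapRight s = gapMid s + halfWidth s := by
  have := wordMap_sub s (1 / 2) (2 / 3)
  rw [gapRight, gapMid, halfWidth]
  linarith

theorem gapLeft_mem_cantorSet (s : List Bool) : gapLeft s ∈ cantorSet :=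
  wordMap_mem_cantorSet s (mem_cantorSet_iff.2 ⟨false, by norm_num [digit, one_mem_cantorSet]⟩)

theorem gapRight_mem_cantorSet (s : List Bool) : gapRight s ∈ cantorSet :=
  wordMap_mem_cantorSet s (mem_cantorSet_iff.2 ⟨true, by norm_num [digit, zero_mem_cantorSet]⟩)

theorem gapLeft_lt_gapRight (s : List Bool) : gapLeft s < gapRight s := by
  rw [gapLeft_eq, gapRight_eq]; linarith [halfWidth_pos s]

theorem gap_subset_Icc (s : List Bool) : gap s ⊆ Icc 0 1 :=
  Ioo_subset_Icc_self.trans (Icc_subset_Icc (cantorSet_subset_unitInterval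
    (gapLeft_mem_cantorSet s)).1 (cantorSet_subset_unitInterval (gapRight_mem_cantorSet s)).2)

theorem gapMid_mem_gap (s : List Bool) : gapMid s ∈ gap s := by
  constructor <;> linarith [gapLeft_eq s, gapRight_eq s, halfWidth_pos s]

theorem gapMid_mem_Ioo (s : List Bool) : gapMid s ∈ Ioo 0 1 :=
  ⟨(cantorSet_subset_unitInterval (gapLeft_mem_cantorSet s)).1.trans_lt (gapMid_mem_gap s).1,
    (gapMid_mem_gap s).2.trans_le (cantorSet_subset_unitInterval (gapRight_mem_cantorSet s)).2⟩

theorem mem_gap_cons {b : Bool} {s : List Bool} {x : ℝ} :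
    x ∈ gap (b :: s) ↔ 3 * x - digit b ∈ gap s := by
  simp only [gap, gapLeft, gapRight, wordMap_cons, mem_Ioo]
  constructor <;> rintro ⟨h₁, h₂⟩ <;> constructor <;> linarith

theorem disjoint_gap_cantorSet : ∀ s, Disjoint (gap s) cantorSet
  | [] => disjoint_left.2 fun x hx hxC => by
      obtain ⟨b, hb⟩ := mem_cantorSet_iff.1 hxC
      exact three_mul_sub_digit_notMem_Icc hx b (cantorSet_subset_unitInterval hb)
  | b :: s => disjoint_left.2 fun x hx hxC => by
      rw [mem_gap_cons] at hx
      obtain ⟨c, hc⟩ := mem_cantorSet_iff.1 hxC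
      obtain rfl := digit_eq_of_mem_Icc (gap_subset_Icc s hx) (cantorSet_subset_unitInterval hc)
      exact disjoint_left.1 (disjoint_gap_cantorSet s) hx hc

theorem gap_disjoint : ∀ {s t : List Bool}, s ≠ t → Disjoint (gap s) (gap t)
  | [], [], h => absurd rfl h
  | [], c :: t, _ => disjoint_left.2 fun _ hx hx' =>
      three_mul_sub_digit_notMem_Icc hx c (gap_subset_Icc t (mem_gap_cons.1 hx'))
  | b :: s, [], _ => disjoint_left.2 fun _ hx hx' =>
      three_mul_sub_digit_notMem_Icc hx' b (gap_subset_Icc s (mem_gap_cons.1 hx))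
  | b :: s, c :: t, h => disjoint_left.2 fun x hx hx' => by
      rw [mem_gap_cons] at hx hx'
      obtain rfl := digit_eq_of_mem_Icc (gap_subset_Icc s hx) (gap_subset_Icc t hx')
      exact disjoint_left.1 (gap_disjoint fun hst => h (by rw [hst])) hx hx'

theorem exists_mem_gap_of_notMem_preCantorSet :
    ∀ (n : ℕ) {x : ℝ}, x ∈ Icc 0 1 → x ∉ preCantorSet n → ∃ s, x ∈ gap s
  | 0, _, hx, hxn => absurd hx hxn
  | n + 1, x, hx, hxn => by
      by_cases hmid : x ∈ Ioo (1 / 3) (2 / 3)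
      · exact ⟨[], hmid⟩
      obtain ⟨b, hb⟩ := exists_digit hx hmid
      obtain ⟨s, hs⟩ := exists_mem_gap_of_notMem_preCantorSet n hb
        fun h => hxn (mem_preCantorSet_succ_iff.2 ⟨b, h⟩)
      exact ⟨b :: s, mem_gap_cons.2 hs⟩

theorem exists_mem_gap {x : ℝ} (hx : x ∈ Icc 0 1) (hxC : x ∉ cantorSet) :
    ∃ s, x ∈ gap s := by
  obtain ⟨n, hn⟩ : ∃ n, x ∉ preCantorSet n := by simpa [cantorSet] using hxC
  exact exists_mem_gap_of_notMem_preCantorSet n hx hn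

noncomputable def height (s : List Bool) : ℝ := 4⁻¹ ^ s.length

noncomputable def tent (s : List Bool) : ℝ → ℝ := tentFun (gapMid s) (halfWidth s) (height s)

theorem height_pos (s : List Bool) : 0 < height s := by
  unfold height; positivity

theorem tent_eq_zero {s : List Bool} {x : ℝ} (hx : x ∉ gap s) : tent s x = 0 :=
  tentFun_eq_zero (halfWidth_pos s) (height_pos s).le (by rwa [gap, gapLeft_eq, gapRight_eq] at hx)

def words (n : ℕ) : Finset (List Bool) := Finset.univ.image (List.ofFn : (Fin n → Bool) → _)

theorem mem_words {n : ℕ} {s : List Bool} : s ∈ words n ↔ s.length = n := by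
  constructor
  · rintro hs
    obtain ⟨v, -, rfl⟩ := Finset.mem_image.1 hs
    exact List.length_ofFn
  · rintro rfl
    exact Finset.mem_image.2 ⟨s.get, Finset.mem_univ _, List.ofFn_get s⟩

theorem card_words (n : ℕ) : (words n).card = 2 ^ n := by
  rw [words, Finset.card_image_of_injective _ List.ofFn_injective]
  simp

noncomputable def levelSum (n : ℕ) (x : ℝ) : ℝ := ∑ s ∈ words n, tent s x

noncomputable def cantorTent (x : ℝ) : ℝ := ∑' n, levelSum n x

theorem levelSum_nonneg (n : ℕ) (x : ℝ) : 0 ≤ levelSum n x :=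
  Finset.sum_nonneg fun _ _ => tentFun_nonneg x

theorem levelSum_le (n : ℕ) (x : ℝ) : levelSum n x ≤ 2⁻¹ ^ n := by
  calc levelSum n x ≤ ∑ s ∈ words n, (4⁻¹ : ℝ) ^ n := Finset.sum_le_sum fun s hs => by
        simpa [tent, height, mem_words.1 hs] using
          tentFun_le (m := gapMid s) (halfWidth_pos s) (height_pos s).le x
    _ = 2⁻¹ ^ n := by
        rw [Finset.sum_const, card_words, nsmul_eq_mul, Nat.cast_pow, ← mul_pow]
        norm_num

theorem summable_levelSum (x : ℝ) : Summable fun n => levelSum n x :=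
  (summable_geometric_of_lt_one (by norm_num) (by norm_num)).of_nonneg_of_le
    (levelSum_nonneg · x) (levelSum_le · x)

theorem continuous_cantorTent : Continuous cantorTent :=
  continuous_tsum (fun n => continuous_finsetSum _ fun _ _ => continuous_tentFun)
    (summable_geometric_of_lt_one (r := 2⁻¹) (by norm_num) (by norm_num)) fun n x => by
      rw [Real.norm_of_nonneg (levelSum_nonneg n x)]
      exact levelSum_le n x

theorem cantorTent_eq_tent {s : List Bool} {x : ℝ} (hx : x ∈ gap s) :
    cantorTent x = tent s x := by
  have hother : ∀ t ≠ s, tent t x = 0 := fun t hts =>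
    tent_eq_zero fun hxt => disjoint_left.1 (gap_disjoint hts) hxt hx
  have hlevel : ∀ n ≠ s.length, levelSum n x = 0 := fun n hn => Finset.sum_eq_zero fun t ht =>
    hother t fun hts => hn (by rw [← mem_words.1 ht, hts])
  rw [cantorTent, tsum_eq_single s.length hlevel, levelSum,
    Finset.sum_eq_single_of_mem s (mem_words.2 rfl) fun t _ => hother t]

theorem cantorTent_eq_zero {x : ℝ} (hx : x ∈ cantorSet) : cantorTent x = 0 := by
  have hgap : ∀ s, x ∉ gap s := fun s hxs => disjoint_left.1 (disjoint_gap_cantorSet s) hxs hx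
  simp [cantorTent, levelSum, tent_eq_zero (hgap _)]

theorem eqOn_cantorTent_tent (s : List Bool) :
    EqOn cantorTent (tent s) (Icc (gapLeft s) (gapRight s)) := by
  intro x hx
  rcases eq_or_lt_of_le hx.1 with rfl | hl
  · rw [cantorTent_eq_zero (gapLeft_mem_cantorSet s), tent_eq_zero (lt_irrefl _ ·.1)]
  rcases eq_or_lt_of_le hx.2 with rfl | hr
  · rw [cantorTent_eq_zero (gapRight_mem_cantorSet s), tent_eq_zero (lt_irrefl _ ·.2)]
  exact cantorTent_eq_tent ⟨hl, hr⟩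

theorem eVariationOn_levelSum_le (n : ℕ) :
    eVariationOn (levelSum n) (Icc 0 1) ≤ ENNReal.ofReal (2 * 2⁻¹ ^ n) := by
  calc eVariationOn (levelSum n) (Icc 0 1)
      ≤ ∑ s ∈ words n, eVariationOn (tent s) (Icc 0 1) := eVariationOn_finsetSum_le _ _ _
    _ ≤ ∑ s ∈ words n, ENNReal.ofReal (2 * 4⁻¹ ^ n) := Finset.sum_le_sum fun s hs => by
        simpa [tent, height, mem_words.1 hs] using eVariationOn_tentFun_le (halfWidth_pos s)
          (height_pos s).le (gapMid_mem_Ioo s).1.le (gapMid_mem_Ioo s).2.le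
    _ = ENNReal.ofReal (2 * 2⁻¹ ^ n) := by
        rw [Finset.sum_const, card_words, nsmul_eq_mul, ← ENNReal.ofReal_natCast,
          ← ENNReal.ofReal_mul (by positivity), Nat.cast_pow, mul_left_comm, ← mul_pow]
        norm_num

theorem boundedVariationOn_cantorTent : BoundedVariationOn cantorTent (Icc 0 1) := by
  have hsum : Summable fun n : ℕ => 2 * (2⁻¹ : ℝ) ^ n :=
    (summable_geometric_of_lt_one (by norm_num) (by norm_num)).mul_left 2
  refine ne_top_of_le_ne_top ?_
    ((eVariationOn_le_tsum fun x _ => (summable_levelSum x).hasSum).trans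
      (ENNReal.tsum_le_tsum eVariationOn_levelSum_le))
  rw [← ENNReal.ofReal_tsum_of_nonneg (fun n => by positivity) hsum]
  exact ENNReal.ofReal_ne_top

theorem cantorTent_gapMid (s : List Bool) : cantorTent (gapMid s) = height s := by
  rw [cantorTent_eq_tent (gapMid_mem_gap s), tent, tentFun_self (halfWidth_pos s) (height_pos s).le]

theorem monotoneOn_cantorTent (s : List Bool) :
    MonotoneOn cantorTent (Icc (gapLeft s) (gapMid s)) :=
  ((monotoneOn_tentFun (halfWidth_pos s) (height_pos s).le).mono fun _ hx => hx.2).congr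
    ((eqOn_cantorTent_tent s).mono (Icc_subset_Icc_right (gapMid_mem_gap s).2.le)).symm

theorem antitoneOn_cantorTent (s : List Bool) :
    AntitoneOn cantorTent (Icc (gapMid s) (gapRight s)) :=
  ((antitoneOn_tentFun (halfWidth_pos s) (height_pos s).le).mono fun _ hx => hx.1).congr
    ((eqOn_cantorTent_tent s).mono (Icc_subset_Icc_left (gapMid_mem_gap s).1.le)).symm

theorem cantorTent_gapMid_sub_add (s : List Bool) {τ : ℝ} (hτ : τ ∈ Icc 0 (halfWidth s)) :
    cantorTent (gapMid s - τ) = cantorTent (gapMid s) - height s / halfWidth s * τ ∧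
      cantorTent (gapMid s + τ) = cantorTent (gapMid s) - height s / halfWidth s * τ := by
  have hmem : ∀ x ∈ Icc (gapMid s - halfWidth s) (gapMid s + halfWidth s),
      cantorTent x = tent s x := fun x hx =>
    eqOn_cantorTent_tent s (by rwa [gapLeft_eq, gapRight_eq])
  have hw := halfWidth_pos s
  rw [cantorTent_gapMid, hmem _ ⟨by linarith [hτ.2], by linarith [hτ.1]⟩,
    hmem _ ⟨by linarith [hτ.1], by linarith [hτ.2]⟩, tent,
    tentFun_sub hw (height_pos s).le hτ, tentFun_add hw (height_pos s).le hτ]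
  exact ⟨rfl, rfl⟩

theorem mem_Kset_of_forall_exists_gapMid {x : ℝ} (hx : x ∈ Icc 0 1)
    (h : ∀ c d, c < x → x < d → ∃ s, gapMid s ∈ Ioo c d) : x ∈ Kset cantorTent 0 1 := by
  refine ⟨hx, ?_⟩
  rintro ⟨c, d, hc, hd, hK⟩
  obtain ⟨s, hs⟩ := h c d hc hd
  set m := gapMid s
  set δ := min (halfWidth s) (min (m - max c 0) (min d 1 - m))
  have hA : max c 0 < m := max_lt hs.1 (gapMid_mem_Ioo s).1
  have hB : m < min d 1 := lt_min hs.2 (gapMid_mem_Ioo s).2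
  have hδ : 0 < δ := lt_min (halfWidth_pos s) (lt_min (by linarith) (by linarith))
  have hA' : max c 0 ≤ m - δ := by
    linarith [min_le_right (halfWidth s) (min (m - max c 0) (min d 1 - m)),
      min_le_left (m - max c 0) (min d 1 - m)]
  have hB' : m + δ ≤ min d 1 := by
    linarith [min_le_right (halfWidth s) (min (m - max c 0) (min d 1 - m)),
      min_le_right (m - max c 0) (min d 1 - m)]
  have hk : 0 < height s / halfWidth s := div_pos (height_pos s) (halfWidth_pos s)
  have hcorner : ∀ τ ∈ Icc 0 δ,
      cantorTent (m - τ) = cantorTent m - height s / halfWidth s * τ ∧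
        cantorTent (m + τ) = cantorTent m - height s / halfWidth s * τ :=
    fun τ hτ => cantorTent_gapMid_sub_add s ⟨hτ.1, hτ.2.trans (min_le_left _ _)⟩
  rcases hK with hconst | hC2
  · have hne := hconst (m - δ) ⟨hA', by linarith⟩ m ⟨by linarith, hB.le⟩
    rw [(hcorner δ ⟨hδ.le, le_rfl⟩).1] at hne
    linarith [mul_pos hk hδ]
  · exact not_hasC2ArcLengthParam_of_corner hk hδ hA' hB' hcorner hC2

theorem exists_wordMap_mem_ball {x : ℝ} (hx : x ∈ cantorSet) {ε : ℝ} (hε : 0 < ε) :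
    ∃ S : List Bool, ∀ y ∈ Icc 0 1, wordMap S y ∈ Metric.ball x ε := by
  obtain ⟨n, hn⟩ := exists_pow_lt_of_lt_one hε (by norm_num : (3⁻¹ : ℝ) < 1)
  obtain ⟨S, hS, y₀, hy₀, rfl⟩ := exists_wordMap_eq hx n
  refine ⟨S, fun y hy => ?_⟩
  have hy₀' := cantorSet_subset_unitInterval hy₀
  have hdist : |y - y₀| ≤ 1 :=
    abs_sub_le_iff.2 ⟨by linarith [hy.2, hy₀'.1], by linarith [hy.1, hy₀'.2]⟩
  rw [Metric.mem_ball, Real.dist_eq, wordMap_sub, abs_mul, abs_of_pos (by positivity), hS]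
  calc (3⁻¹ : ℝ) ^ n * |y - y₀| ≤ 3⁻¹ ^ n :=
        mul_le_of_le_one_right (by positivity) hdist
    _ < ε := hn

theorem cantorSet_subset_Kset : cantorSet ⊆ Kset cantorTent 0 1 := fun x hx =>
  mem_Kset_of_forall_exists_gapMid (cantorSet_subset_unitInterval hx) fun c d hc hd => by
    obtain ⟨S, hS⟩ := exists_wordMap_mem_ball hx (lt_min (sub_pos.2 hc) (sub_pos.2 hd))
    have h : gapMid S ∈ _ := hS (1 / 2) ⟨by norm_num, by norm_num⟩
    rw [Real.ball_eq_Ioo] at h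
    exact ⟨S, by linarith [h.1, min_le_left (x - c) (d - x)],
      by linarith [h.2, min_le_right (x - c) (d - x)]⟩

theorem range_gapMid_subset_Kset : range gapMid ⊆ Kset cantorTent 0 1 := by
  rintro _ ⟨s, rfl⟩
  exact mem_Kset_of_forall_exists_gapMid (Ioo_subset_Icc_self (gapMid_mem_Ioo s))
    fun c d hc hd => ⟨s, hc, hd⟩

theorem Kset_cantorTent_subset : Kset cantorTent 0 1 ⊆ cantorSet ∪ range gapMid := by
  rintro x ⟨hx, hK⟩
  by_contra hxn
  rw [mem_union, not_or] at hxn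
  obtain ⟨s, hs⟩ := exists_mem_gap hx hxn.1
  have hL := (cantorSet_subset_unitInterval (gapLeft_mem_cantorSet s)).1
  have hR := (cantorSet_subset_unitInterval (gapRight_mem_cantorSet s)).2
  have hM := gapMid_mem_Ioo s
  refine hK ?_
  rcases lt_or_gt_of_ne (fun h => hxn.2 ⟨s, h.symm⟩ : x ≠ gapMid s) with hlt | hgt
  · refine ⟨(gapLeft s + x) / 2, (x + gapMid s) / 2, by linarith [hs.1], by linarith,
      Or.inr ?_⟩
    rw [max_eq_left (by linarith [hs.1]), min_eq_left (by linarith [hM.2])]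
    exact MonotoneOn.hasC2ArcLengthParam (by linarith [hs.1])
      ((monotoneOn_cantorTent s).mono (Icc_subset_Icc (by linarith [hs.1]) (by linarith)))
  · refine ⟨(gapMid s + x) / 2, (x + gapRight s) / 2, by linarith, by linarith [hs.2],
      Or.inr ?_⟩
    rw [max_eq_left (by linarith [hM.1]), min_eq_left (by linarith [hs.2])]
    exact AntitoneOn.hasC2ArcLengthParam (by linarith [hs.2])
      ((antitoneOn_cantorTent s).mono (Icc_subset_Icc (by linarith) (by linarith [hs.2])))

theorem Kset_cantorTent : Kset cantorTent 0 1 = cantorSet ∪ range gapMid :=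
  Kset_cantorTent_subset.antisymm (union_subset cantorSet_subset_Kset range_gapMid_subset_Kset)

theorem vfn_gapRight_sub_vfn_gapLeft (s : List Bool) :
    vfn cantorTent 0 (gapRight s) - vfn cantorTent 0 (gapLeft s) = 2 * height s := by
  have hM := gapMid_mem_gap s
  rw [vfn_add boundedVariationOn_cantorTent
      (cantorSet_subset_unitInterval (gapLeft_mem_cantorSet s)).1 (gapLeft_lt_gapRight s).le
      (cantorSet_subset_unitInterval (gapRight_mem_cantorSet s)).2, add_sub_cancel_left,
    eVariationOn_Icc_of_monotoneOn_of_antitoneOn hM.1.le hM.2.le (monotoneOn_cantorTent s)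
      (antitoneOn_cantorTent s), cantorTent_gapMid, cantorTent_eq_zero (gapLeft_mem_cantorSet s),
    cantorTent_eq_zero (gapRight_mem_cantorSet s), sub_zero, ← ENNReal.ofReal_add
      (height_pos s).le (height_pos s).le, ENNReal.toReal_ofReal (by linarith [height_pos s])]
  ring

theorem ofReal_two_inv_pow_le_jump (s : List Bool) :
    ENNReal.ofReal (2⁻¹ ^ s.length) ≤ ENNReal.ofReal
      (|vfn cantorTent 0 (gapRight s) - vfn cantorTent 0 (gapLeft s)| ^ (1 / 2 : ℝ)) := by
  rw [vfn_gapRight_sub_vfn_gapLeft, abs_of_pos (by linarith [height_pos s]), ← Real.sqrt_eq_rpow]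
  refine ENNReal.ofReal_le_ofReal ((Real.le_sqrt (by positivity) (by linarith [height_pos s])).2 ?_)
  rw [height, ← pow_mul, mul_comm, pow_mul]
  norm_num

theorem ofReal_two_inv_pow_le_sum_jump (S : List Bool) (j : ℕ) :
    ENNReal.ofReal (2⁻¹ ^ S.length) ≤ ∑ r ∈ words j, ENNReal.ofReal
      (|vfn cantorTent 0 (gapRight (S ++ r)) - vfn cantorTent 0 (gapLeft (S ++ r))| ^
        (1 / 2 : ℝ)) := by
  refine le_trans (le_of_eq ?_) (Finset.sum_le_sum fun r _ => ofReal_two_inv_pow_le_jump (S ++ r))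
  rw [Finset.sum_congr rfl fun r hr => by rw [List.length_append, mem_words.1 hr],
    Finset.sum_const, card_words, nsmul_eq_mul, ← ENNReal.ofReal_natCast,
    ← ENNReal.ofReal_mul (by positivity), pow_add, Nat.cast_pow, mul_left_comm, ← mul_pow]
  norm_num

theorem fracVar_vfn_cantorTent_eq_top {S : List Bool} {K : Set ℝ}
    (hK : ∀ y ∈ cantorSet, wordMap S y ∈ K) : fracVar (1 / 2) (vfn cantorTent 0) K = ⊤ := by
  by_contra htop
  obtain ⟨N, hN⟩ := ENNReal.exists_nat_mul_gt
    (ENNReal.ofReal_pos.2 (by positivity : (0 : ℝ) < 2⁻¹ ^ S.length)).ne' htop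
  refine hN.not_ge ?_
  let I := (Finset.range N).biUnion words
  have hdisj : (I : Set (List Bool)).PairwiseDisjoint fun r => gap (S ++ r) :=
    fun r _ r' _ h => gap_disjoint fun h' => h (List.append_cancel_left h')
  calc (N : ℝ≥0∞) * ENNReal.ofReal (2⁻¹ ^ S.length)
      = ∑ _j ∈ Finset.range N, ENNReal.ofReal (2⁻¹ ^ S.length) := by simp
    _ ≤ _ := Finset.sum_le_sum fun j _ => ofReal_two_inv_pow_le_sum_jump S j
    _ = _ := (Finset.sum_biUnion fun j _ j' _ h => Finset.disjoint_left.2 fun r hr hr' =>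
        h ((mem_words.1 hr).symm.trans (mem_words.1 hr'))).symm
    _ ≤ _ := sum_le_fracVar_s12 I
        (fun r _ => by rw [gapLeft, wordMap_append]; exact hK _ (gapLeft_mem_cantorSet r))
        (fun r _ => by rw [gapRight, wordMap_append]; exact hK _ (gapRight_mem_cantorSet r))
        (fun r _ => gapLeft_lt_gapRight (S ++ r)) hdisj

theorem not_VBGHalf_cantorTent : ¬ VBGHalf cantorTent 0 1 := by
  rintro ⟨-, A, hA, hKA⟩
  obtain ⟨m, x, hx, ε, hε, hball⟩ :=
    isClosed_cantorSet.exists_inter_ball_subset_of_subset_iUnion ⟨0, zero_mem_cantorSet⟩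
      (fun m => (hA m).1) (hKA ▸ cantorSet_subset_Kset)
  obtain ⟨S, hS⟩ := exists_wordMap_mem_ball hx hε
  refine (hA m).2.2.ne (fracVar_vfn_cantorTent_eq_top (S := S) fun y hy => hball ?_)
  exact ⟨wordMap_mem_cantorSet S hy, hS y (cantorSet_subset_unitInterval hy)⟩

end CantorTent

open CantorTent

/-- There is a continuous function `f : [0,1] → ℝ` of bounded variation
which is not `VBG_{1/2}`, yet `K_f` is a countable union of closed sets `A m ⊆ K_f`
with `V_{1/2}(f, A m) < ∞` for every `m`. -/
theorem stmt12 :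
    ∃ f : ℝ → ℝ, ContinuousOn f (Set.Icc (0:ℝ) 1) ∧
      BoundedVariationOn f (Set.Icc (0:ℝ) 1) ∧
      ¬ VBGHalf f 0 1 ∧
      ∃ A : ℕ → Set ℝ,
        (∀ m, IsClosed (A m) ∧ A m ⊆ Kset f 0 1 ∧ fracVar (1/2) f (A m) < ⊤) ∧
        Kset f 0 1 = ⋃ m, A m := by
  obtain ⟨e, he⟩ := exists_surjective_nat (List Bool)
  let A : ℕ → Set ℝ := fun
    | 0 => cantorSet
    | k + 1 => {gapMid (e k)}
  have hK : Kset cantorTent 0 1 = ⋃ m, A m := by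
    rw [Kset_cantorTent, ← union_iUnion_nat_succ, ← he.range_comp,
      ← iUnion_singleton_eq_range]
    rfl
  refine ⟨cantorTent, continuous_cantorTent.continuousOn, boundedVariationOn_cantorTent,
    not_VBGHalf_cantorTent, A, fun m => ⟨?_, hK ▸ subset_iUnion A m, ?_⟩, hK⟩
  · cases m
    exacts [isClosed_cantorSet, isClosed_singleton]
  · refine lt_of_eq_of_lt (fracVar_eq_zero_of_subsingleton (by norm_num) ?_) ENNReal.zero_lt_top
    cases m
    · exact subsingleton_singleton.anti fun _ ⟨x, hx, hfx⟩ => hfx ▸ cantorTent_eq_zero hx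
    · exact subsingleton_singleton.image _
end

section
/- Let X be a normed linear space and f,g:[a,b]→X be continuous. If f is VBG_{1/2} and g is Lebesgue equivalent to f (i.e., g = f∘h for some homeomorphism h of [a,b] onto itself), then g is VBG_{1/2}. -/
open Set MeasureTheory
open scoped ENNReal NNReal

/-! ### Auxiliary lemmas for the proof of `stmt14` -/

section Aux

open Function

/-- A strictly monotone map which is a bijection between `[p,q]` and `[p',q']` restricts to a
bijection of subintervals. -/
lemma aux_bijOn_sub {e : ℝ → ℝ} {p q p' q' c d : ℝ}
    (hm : StrictMonoOn e (Set.Icc p q)) (hb : Set.BijOn e (Set.Icc p q) (Set.Icc p' q'))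
    (h1 : p ≤ c) (h2 : c ≤ d) (h3 : d ≤ q) :
    Set.BijOn e (Set.Icc c d) (Set.Icc (e c) (e d)) := by
  have hcm : c ∈ Set.Icc p q := ⟨h1, h2.trans h3⟩
  have hdm : d ∈ Set.Icc p q := ⟨h1.trans h2, h3⟩
  refine ⟨fun x hx => ?_, hm.injOn.mono (Set.Icc_subset_Icc h1 h3), fun y hy => ?_⟩
  · have hxm : x ∈ Set.Icc p q := ⟨h1.trans hx.1, hx.2.trans h3⟩
    exact ⟨hm.monotoneOn hcm hxm hx.1, hm.monotoneOn hxm hdm hx.2⟩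
  · have hyI : y ∈ Set.Icc p' q' :=
      ⟨(hb.mapsTo hcm).1.trans hy.1, hy.2.trans (hb.mapsTo hdm).2⟩
    obtain ⟨u, hu, rfl⟩ := hb.surjOn hyI
    refine ⟨u, ⟨?_, ?_⟩, rfl⟩
    · by_contra hcu
      exact absurd hy.1 (not_le.2 (hm hu hcm (lt_of_not_ge hcu)))
    · by_contra hud
      exact absurd hy.2 (not_le.2 (hm hdm hu (lt_of_not_ge hud)))

/-- Anti version of `aux_bijOn_sub`. -/
lemma aux_bijOn_sub_anti {e : ℝ → ℝ} {p q p' q' c d : ℝ}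
    (hm : StrictAntiOn e (Set.Icc p q)) (hb : Set.BijOn e (Set.Icc p q) (Set.Icc p' q'))
    (h1 : p ≤ c) (h2 : c ≤ d) (h3 : d ≤ q) :
    Set.BijOn e (Set.Icc c d) (Set.Icc (e d) (e c)) := by
  have hcm : c ∈ Set.Icc p q := ⟨h1, h2.trans h3⟩
  have hdm : d ∈ Set.Icc p q := ⟨h1.trans h2, h3⟩
  refine ⟨fun x hx => ?_, hm.injOn.mono (Set.Icc_subset_Icc h1 h3), fun y hy => ?_⟩
  · have hxm : x ∈ Set.Icc p q := ⟨h1.trans hx.1, hx.2.trans h3⟩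
    exact ⟨hm.antitoneOn hxm hdm hx.2, hm.antitoneOn hcm hxm hx.1⟩
  · have hyI : y ∈ Set.Icc p' q' :=
      ⟨(hb.mapsTo hdm).1.trans hy.1, hy.2.trans (hb.mapsTo hcm).2⟩
    obtain ⟨u, hu, rfl⟩ := hb.surjOn hyI
    refine ⟨u, ⟨?_, ?_⟩, rfl⟩
    · by_contra hcu
      exact absurd hy.2 (not_le.2 (hm hu hcm (lt_of_not_ge hcu)))
    · by_contra hud
      exact absurd hy.1 (not_le.2 (hm hdm hu (lt_of_not_ge hud)))

/-- Endpoints of a strictly monotone bijection between intervals. -/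
lemma aux_endpoints {e : ℝ → ℝ} {p q p' q' : ℝ} (hpq : p ≤ q)
    (hm : StrictMonoOn e (Set.Icc p q)) (hb : Set.BijOn e (Set.Icc p q) (Set.Icc p' q')) :
    e p = p' ∧ e q = q' := by
  have hp : p ∈ Set.Icc p q := ⟨le_rfl, hpq⟩
  have hq : q ∈ Set.Icc p q := ⟨hpq, le_rfl⟩
  constructor
  · obtain ⟨u, hu, hup⟩ := hb.surjOn ⟨le_rfl, (hb.mapsTo hp).1.trans (hb.mapsTo hp).2⟩
    exact le_antisymm (hup ▸ hm.monotoneOn hp hu hu.1) (hb.mapsTo hp).1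
  · obtain ⟨u, hu, huq⟩ := hb.surjOn ⟨(hb.mapsTo hq).1.trans (hb.mapsTo hq).2, le_rfl⟩
    exact le_antisymm (hb.mapsTo hq).2 (huq ▸ hm.monotoneOn hu hq hu.2)

/-- Endpoints of a strictly antitone bijection between intervals. -/
lemma aux_endpoints_anti {e : ℝ → ℝ} {p q p' q' : ℝ} (hpq : p ≤ q)
    (hm : StrictAntiOn e (Set.Icc p q)) (hb : Set.BijOn e (Set.Icc p q) (Set.Icc p' q')) :
    e p = q' ∧ e q = p' := by
  have hp : p ∈ Set.Icc p q := ⟨le_rfl, hpq⟩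
  have hq : q ∈ Set.Icc p q := ⟨hpq, le_rfl⟩
  constructor
  · obtain ⟨u, hu, huq⟩ := hb.surjOn ⟨(hb.mapsTo hp).1.trans (hb.mapsTo hp).2, le_rfl⟩
    exact le_antisymm (hb.mapsTo hp).2 (huq ▸ hm.antitoneOn hp hu hu.1)
  · obtain ⟨u, hu, hup⟩ := hb.surjOn ⟨le_rfl, (hb.mapsTo hq).1.trans (hb.mapsTo hq).2⟩
    exact le_antisymm (hup ▸ hm.antitoneOn hu hq hu.2) (hb.mapsTo hq).1

/-- The inverse of a strictly monotone map is strictly monotone. -/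
lemma aux_inv_strictMonoOn {e τ : ℝ → ℝ} {s t : Set ℝ}
    (hm : StrictMonoOn e s) (hmap : Set.MapsTo τ t s)
    (hinv : ∀ y ∈ t, e (τ y) = y) : StrictMonoOn τ t := by
  intro y1 h1 y2 h2 h12
  rcases lt_trichotomy (τ y1) (τ y2) with h | h | h
  · exact h
  · exact absurd (by rw [← hinv y1 h1, ← hinv y2 h2, h]) h12.ne
  · exact absurd (by rw [← hinv y1 h1, ← hinv y2 h2]; exact hm (hmap h2) (hmap h1) h)
      (not_lt.2 h12.le)

/-- The inverse of a strictly antitone map is strictly antitone. -/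
lemma aux_inv_strictAntiOn {e τ : ℝ → ℝ} {s t : Set ℝ}
    (hm : StrictAntiOn e s) (hmap : Set.MapsTo τ t s)
    (hinv : ∀ y ∈ t, e (τ y) = y) : StrictAntiOn τ t := by
  intro y1 h1 y2 h2 h12
  rcases lt_trichotomy (τ y2) (τ y1) with h | h | h
  · exact h
  · exact absurd (by rw [← hinv y1 h1, ← hinv y2 h2, h]) h12.ne'
  · exact absurd (by rw [← hinv y1 h1, ← hinv y2 h2]; exact hm (hmap h1) (hmap h2) h)
      (not_lt.2 h12.le)

/-- Variation transfer along a monotone bijection. -/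
lemma aux_evar_mono {X : Type*} [NormedAddCommGroup X]
    {f gg : ℝ → X} {e : ℝ → ℝ} {c d c' d' : ℝ}
    (hb : Set.BijOn e (Set.Icc c d) (Set.Icc c' d')) (hm : MonotoneOn e (Set.Icc c d))
    (hfe : ∀ y ∈ Set.Icc c d, f y = gg (e y)) :
    eVariationOn f (Set.Icc c d) = eVariationOn gg (Set.Icc c' d') := by
  rw [eVariationOn.eq_of_eqOn (show Set.EqOn f (gg ∘ e) (Set.Icc c d) from fun y hy => hfe y hy),
    eVariationOn.comp_eq_of_monotoneOn gg e hm, hb.image_eq]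

/-- Variation transfer along an antitone bijection. -/
lemma aux_evar_anti {X : Type*} [NormedAddCommGroup X]
    {f gg : ℝ → X} {e : ℝ → ℝ} {c d c' d' : ℝ}
    (hb : Set.BijOn e (Set.Icc c d) (Set.Icc c' d')) (hm : AntitoneOn e (Set.Icc c d))
    (hfe : ∀ y ∈ Set.Icc c d, f y = gg (e y)) :
    eVariationOn f (Set.Icc c d) = eVariationOn gg (Set.Icc c' d') := by
  rw [eVariationOn.eq_of_eqOn (show Set.EqOn f (gg ∘ e) (Set.Icc c d) from fun y hy => hfe y hy),
    eVariationOn.comp_eq_of_antitoneOn gg e hm, hb.image_eq]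

/-- The "nice" property (constant or C² arc-length parametrizable) transfers along
a strictly monotone bijection `e : [c',d'] → [c,d]` with `f = g ∘ e`. -/
lemma aux_nice_mono {X : Type*} [NormedAddCommGroup X] [NormedSpace ℝ X]
    {f gg : ℝ → X} {e : ℝ → ℝ} {c d c' d' : ℝ} (hcd' : c' ≤ d')
    (hm : StrictMonoOn e (Set.Icc c' d')) (hbij : Set.BijOn e (Set.Icc c' d') (Set.Icc c d))
    (hfe : ∀ y ∈ Set.Icc c' d', f y = gg (e y)) :
    ((∀ y ∈ Set.Icc c d, ∀ z ∈ Set.Icc c d, gg y = gg z) ∨ HasC2ArcLengthParam gg c d) →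
    ((∀ y ∈ Set.Icc c' d', ∀ z ∈ Set.Icc c' d', f y = f z) ∨ HasC2ArcLengthParam f c' d') := by
  obtain ⟨hec, hed⟩ := aux_endpoints hcd' hm hbij
  rintro (hconst | ⟨hBV, g₀, hdiff, hrep⟩)
  · exact Or.inl fun y hy z hz => by
      rw [hfe y hy, hfe z hz]
      exact hconst _ (hbij.mapsTo hy) _ (hbij.mapsTo hz)
  · right
    have hvar : ∀ x ∈ Set.Icc c' d',
        eVariationOn f (Set.Icc c' x) = eVariationOn gg (Set.Icc c (e x)) := by
      intro x hx
      have := aux_evar_mono (aux_bijOn_sub hm hbij le_rfl hx.1 hx.2)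
        ((hm.mono (Set.Icc_subset_Icc le_rfl hx.2)).monotoneOn)
        (fun y hy => hfe y (Set.Icc_subset_Icc le_rfl hx.2 hy))
      rwa [hec] at this
    have hvfn : ∀ x ∈ Set.Icc c' d', vfn f c' x = vfn gg c (e x) := fun x hx => by
      rw [vfn, vfn, hvar x hx]
    have hL : vfn f c' d' = vfn gg c d := by rw [hvfn d' ⟨hcd', le_rfl⟩, hed]
    have hBV' : BoundedVariationOn f (Set.Icc c' d') := by
      show eVariationOn f (Set.Icc c' d') ≠ ⊤
      rw [hvar d' ⟨hcd', le_rfl⟩, hed]; exact hBV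
    exact ⟨hBV', g₀, by rw [hL]; exact hdiff, fun x hx => by
      rw [hvfn x hx, hfe x hx]; exact hrep _ (hbij.mapsTo hx)⟩

/-- The "nice" property transfers along a strictly antitone bijection. -/
lemma aux_nice_anti {X : Type*} [NormedAddCommGroup X] [NormedSpace ℝ X]
    {f gg : ℝ → X} {e : ℝ → ℝ} {c d c' d' : ℝ} (hcd' : c' ≤ d')
    (hm : StrictAntiOn e (Set.Icc c' d')) (hbij : Set.BijOn e (Set.Icc c' d') (Set.Icc c d))
    (hfe : ∀ y ∈ Set.Icc c' d', f y = gg (e y)) :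
    ((∀ y ∈ Set.Icc c d, ∀ z ∈ Set.Icc c d, gg y = gg z) ∨ HasC2ArcLengthParam gg c d) →
    ((∀ y ∈ Set.Icc c' d', ∀ z ∈ Set.Icc c' d', f y = f z) ∨ HasC2ArcLengthParam f c' d') := by
  obtain ⟨hec, hed⟩ := aux_endpoints_anti hcd' hm hbij
  rintro (hconst | ⟨hBV, g₀, hdiff, hrep⟩)
  · exact Or.inl fun y hy z hz => by
      rw [hfe y hy, hfe z hz]
      exact hconst _ (hbij.mapsTo hy) _ (hbij.mapsTo hz)
  · right
    have hcd : c ≤ d := by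
      have := hbij.mapsTo ⟨le_rfl, hcd'⟩; exact this.1.trans this.2
    have hvar : ∀ x ∈ Set.Icc c' d',
        eVariationOn f (Set.Icc c' x) = eVariationOn gg (Set.Icc (e x) d) := by
      intro x hx
      have := aux_evar_anti (aux_bijOn_sub_anti hm hbij le_rfl hx.1 hx.2)
        ((hm.mono (Set.Icc_subset_Icc le_rfl hx.2)).antitoneOn)
        (fun y hy => hfe y (Set.Icc_subset_Icc le_rfl hx.2 hy))
      rwa [hec] at this
    have hsplit : ∀ x ∈ Set.Icc c' d', vfn f c' x = vfn gg c d - vfn gg c (e x) := by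
      intro x hx
      have hexm : e x ∈ Set.Icc c d := hbij.mapsTo hx
      have hadd := eVariationOn.Icc_add_Icc gg (s := Set.univ) hexm.1 hexm.2 (Set.mem_univ _)
      simp only [Set.univ_inter] at hadd
      have h1 : eVariationOn gg (Set.Icc c (e x)) ≠ ⊤ :=
        fun hEq => hBV (top_le_iff.1 (hEq ▸ eVariationOn.mono gg (Set.Icc_subset_Icc le_rfl hexm.2)))
      have h2 : eVariationOn gg (Set.Icc (e x) d) ≠ ⊤ :=
        fun hEq => hBV (top_le_iff.1 (hEq ▸ eVariationOn.mono gg (Set.Icc_subset_Icc hexm.1 le_rfl)))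
      have hth := congrArg ENNReal.toReal hadd
      rw [ENNReal.toReal_add h1 h2] at hth
      rw [vfn, hvar x hx]
      show (eVariationOn gg (Set.Icc (e x) d)).toReal
        = (eVariationOn gg (Set.Icc c d)).toReal - (eVariationOn gg (Set.Icc c (e x))).toReal
      linarith [hth]
    have hvloc : vfn gg c c = 0 := by
      rw [vfn, Set.Icc_self, eVariationOn.subsingleton gg (Set.subsingleton_singleton)]
      rfl
    have hLval : vfn f c' d' = vfn gg c d := by
      rw [hsplit d' ⟨hcd', le_rfl⟩, hed, hvloc, sub_zero]
    have hBV' : BoundedVariationOn f (Set.Icc c' d') := by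
      show eVariationOn f (Set.Icc c' d') ≠ ⊤
      rw [hvar d' ⟨hcd', le_rfl⟩, hed]; exact hBV
    set L := vfn gg c d with hLdef
    refine ⟨hBV', fun t => g₀ (L - t), ?_, fun x hx => ?_⟩
    · rw [hLval]
      obtain ⟨G', G'', h1, h2⟩ := hdiff
      have hmap : Set.MapsTo (fun s : ℝ => L - s) (Set.Icc 0 L) (Set.Icc 0 L) := by
        intro s hs
        simp only [Set.mem_Icc] at hs ⊢
        constructor <;> linarith
      refine ⟨fun t => (-1:ℝ) • G' (L - t), fun t => (-1:ℝ) • ((-1:ℝ) • G'' (L - t)), ?_, ?_⟩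
      · intro x hx
        have hi : HasDerivWithinAt (fun s : ℝ => L - s) (-1) (Set.Icc 0 L) x :=
          ((hasDerivAt_id x).const_sub L).hasDerivWithinAt
        exact (h1 (L - x) (hmap hx)).scomp x hi hmap
      · intro x hx
        have hi : HasDerivWithinAt (fun s : ℝ => L - s) (-1) (Set.Icc 0 L) x :=
          ((hasDerivAt_id x).const_sub L).hasDerivWithinAt
        exact ((h2 (L - x) (hmap hx)).scomp x hi hmap).const_smul (-1:ℝ)
    · show g₀ (L - vfn f c' x) = f x
      have h1 : L - vfn f c' x = vfn gg c (e x) := by rw [hsplit x hx]; ring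
      rw [h1, hfe x hx]
      exact hrep _ (hbij.mapsTo hx)

/-- Choice of the outer interval endpoints. -/
lemma aux_pick {a b y u v : ℝ} (h1 : a ≤ u) (h2 : v ≤ b) (h3 : u ≤ y) (h4 : y ≤ v)
    (h5 : u = y → u = a) (h6 : y = v → v = b) :
    ∃ c d : ℝ, c < y ∧ y < d ∧ max c a = u ∧ min d b = v := by
  refine ⟨if u < y then u else a - 1, if y < v then v else b + 1, ?_, ?_, ?_, ?_⟩
  · split_ifs with h
    · exact h
    · have hu : u = y := le_antisymm h3 (not_lt.1 h)
      calc a - 1 < a := by linarith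
        _ = u := (h5 hu).symm
        _ = y := hu
  · split_ifs with h
    · exact h
    · have hv : y = v := le_antisymm h4 (not_lt.1 h)
      calc y = v := hv
        _ = b := h6 hv
        _ < b + 1 := by linarith
  · split_ifs with h
    · exact max_eq_left h1
    · have hu : u = y := le_antisymm h3 (not_lt.1 h)
      rw [max_eq_right (by linarith : a - 1 ≤ a), h5 hu]
  · split_ifs with h
    · exact min_eq_left h2
    · have hv : y = v := le_antisymm h4 (not_lt.1 h)
      rw [min_eq_right (by linarith : b ≤ b + 1), h6 hv]

/-- A sum over an admissible packing is at most the fractional variation. -/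
lemma aux_sum_le_fracVar (α : ℝ) (ψ : ℝ → ℝ) (K : Set ℝ) {m : ℕ} {q : Fin m → ℝ × ℝ}
    (h1 : ∀ i, (q i).1 ∈ K ∧ (q i).2 ∈ K ∧ (q i).1 ≤ (q i).2)
    (h2 : ∀ i j, i < j → (q i).2 ≤ (q j).1) :
    ∑ i, ENNReal.ofReal (|ψ (q i).2 - ψ (q i).1| ^ α) ≤ fracVar α ψ K := by
  unfold fracVar
  exact le_iSup_of_le m <| le_iSup_of_le q <| le_iSup_of_le h1 <| le_iSup_of_le h2 le_rfl

lemma aux_fracVar_le_mono (α : ℝ) {φ ψ : ℝ → ℝ} {K K' : Set ℝ} {e : ℝ → ℝ}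
    (hmap : Set.MapsTo e K K') (hmono : ∀ x ∈ K, ∀ y ∈ K, x ≤ y → e x ≤ e y)
    (habs : ∀ x ∈ K, ∀ y ∈ K, |φ y - φ x| = |ψ (e y) - ψ (e x)|) :
    fracVar α φ K ≤ fracVar α ψ K' := by
  unfold fracVar
  refine iSup_le fun m => iSup_le fun p => iSup_le fun h1 => iSup_le fun h2 => ?_
  have hsum : ∑ i, ENNReal.ofReal (|φ (p i).2 - φ (p i).1| ^ α)
      = ∑ i, ENNReal.ofReal (|ψ (e (p i).2) - ψ (e (p i).1)| ^ α) :=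
    Finset.sum_congr rfl fun i _ => by rw [habs _ (h1 i).1 _ (h1 i).2.1]
  rw [hsum]
  exact aux_sum_le_fracVar α ψ K' (q := fun i => (e (p i).1, e (p i).2))
    (fun i => ⟨hmap (h1 i).1, hmap (h1 i).2.1, hmono _ (h1 i).1 _ (h1 i).2.1 (h1 i).2.2⟩)
    (fun i j hij => hmono _ (h1 i).2.1 _ (h1 j).1 (h2 i j hij))

lemma aux_fracVar_le_anti (α : ℝ) {φ ψ : ℝ → ℝ} {K K' : Set ℝ} {e : ℝ → ℝ}
    (hmap : Set.MapsTo e K K') (hanti : ∀ x ∈ K, ∀ y ∈ K, x ≤ y → e y ≤ e x)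
    (habs : ∀ x ∈ K, ∀ y ∈ K, |φ y - φ x| = |ψ (e y) - ψ (e x)|) :
    fracVar α φ K ≤ fracVar α ψ K' := by
  unfold fracVar
  refine iSup_le fun m => iSup_le fun p => iSup_le fun h1 => iSup_le fun h2 => ?_
  have hsum : ∑ i, ENNReal.ofReal (|φ (p i).2 - φ (p i).1| ^ α)
      = ∑ i, ENNReal.ofReal (|ψ (e (p (Fin.rev i)).1) - ψ (e (p (Fin.rev i)).2)| ^ α) := by
    rw [← Equiv.sum_comp (Fin.revPerm) (fun i => ENNReal.ofReal (|φ (p i).2 - φ (p i).1| ^ α))]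
    refine Finset.sum_congr rfl fun i _ => ?_
    rw [abs_sub_comm (ψ _), ← habs _ (h1 _).1 _ (h1 _).2.1]
    simp
  rw [hsum]
  exact aux_sum_le_fracVar α ψ K' (q := fun i => (e (p (Fin.rev i)).2, e (p (Fin.rev i)).1))
    (fun i => ⟨hmap (h1 _).2.1, hmap (h1 _).1, hanti _ (h1 _).1 _ (h1 _).2.1 (h1 _).2.2⟩)
    (fun i j hij => hanti _ (h1 (Fin.rev j)).2.1 _ (h1 (Fin.rev i)).1
      (h2 _ _ (Fin.rev_lt_rev.2 hij)))

/-- Transfer of the "locally nice" property at a point along a strictly monotone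
self-homeomorphism of `[a,b]`. -/
lemma aux_trans_mono {X : Type*} [NormedAddCommGroup X] [NormedSpace ℝ X]
    {f gg : ℝ → X} {σ : ℝ → ℝ} {a b x : ℝ} (hab : a ≤ b)
    (hm : StrictMonoOn σ (Set.Icc a b)) (hbij : Set.BijOn σ (Set.Icc a b) (Set.Icc a b))
    (hge : ∀ y ∈ Set.Icc a b, gg y = f (σ y)) (hx : x ∈ Set.Icc a b)
    (H : ∃ c d : ℝ, c < x ∧ x < d ∧
      ((∀ y ∈ Set.Icc (max c a) (min d b), ∀ z ∈ Set.Icc (max c a) (min d b), gg y = gg z) ∨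
       HasC2ArcLengthParam gg (max c a) (min d b))) :
    ∃ c d : ℝ, c < σ x ∧ σ x < d ∧
      ((∀ y ∈ Set.Icc (max c a) (min d b), ∀ z ∈ Set.Icc (max c a) (min d b), f y = f z) ∨
       HasC2ArcLengthParam f (max c a) (min d b)) := by
  obtain ⟨c, d, hcx, hxd, hnice⟩ := H
  set c₀ := max c a with hc₀
  set d₀ := min d b with hd₀
  have hac₀ : a ≤ c₀ := le_max_right _ _
  have hc₀x : c₀ ≤ x := max_le hcx.le hx.1
  have hxd₀ : x ≤ d₀ := le_min hxd.le hx.2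
  have hd₀b : d₀ ≤ b := min_le_right _ _
  have hc₀d₀ : c₀ ≤ d₀ := hc₀x.trans hxd₀
  have hc₀m : c₀ ∈ Set.Icc a b := ⟨hac₀, hc₀d₀.trans hd₀b⟩
  have hd₀m : d₀ ∈ Set.Icc a b := ⟨hac₀.trans hc₀d₀, hd₀b⟩
  have hxm : x ∈ Set.Icc c₀ d₀ := ⟨hc₀x, hxd₀⟩
  have hlocb : Set.BijOn σ (Set.Icc c₀ d₀) (Set.Icc (σ c₀) (σ d₀)) :=
    aux_bijOn_sub hm hbij hac₀ hc₀d₀ hd₀b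
  set τ := Function.invFunOn σ (Set.Icc c₀ d₀) with hτ
  have hinv : Set.InvOn τ σ (Set.Icc c₀ d₀) (Set.Icc (σ c₀) (σ d₀)) := hlocb.invOn_invFunOn
  have hτbij : Set.BijOn τ (Set.Icc (σ c₀) (σ d₀)) (Set.Icc c₀ d₀) := hlocb.symm hinv.symm
  have hτm : StrictMonoOn τ (Set.Icc (σ c₀) (σ d₀)) :=
    aux_inv_strictMonoOn (hm.mono (Set.Icc_subset_Icc hac₀ hd₀b)) hτbij.mapsTo
      (fun y hy => hinv.2 hy)
  have hfe : ∀ y ∈ Set.Icc (σ c₀) (σ d₀), f y = gg (τ y) := by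
    intro y hy
    have h1 : τ y ∈ Set.Icc c₀ d₀ := hτbij.mapsTo hy
    rw [hge (τ y) ⟨hac₀.trans h1.1, h1.2.trans hd₀b⟩, hinv.2 hy]
  have hnice' := aux_nice_mono (hm.monotoneOn hc₀m hd₀m hc₀d₀) hτm hτbij hfe hnice
  obtain ⟨hσa, hσb⟩ := aux_endpoints hab hm hbij
  have h3 : σ c₀ ≤ σ x := hm.monotoneOn hc₀m hx hc₀x
  have h4 : σ x ≤ σ d₀ := hm.monotoneOn hx hd₀m hxd₀
  have h5 : σ c₀ = σ x → σ c₀ = a := by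
    intro hEq
    have hcx' : c₀ = x := hm.injOn hc₀m hx hEq
    have hxa : x = a := by
      rcases le_or_gt x a with hle | hlt
      · exact le_antisymm hle hx.1
      · exact absurd hcx' (max_lt hcx hlt).ne
    rw [hcx', hxa, hσa]
  have h6 : σ x = σ d₀ → σ d₀ = b := by
    intro hEq
    have hdx' : x = d₀ := hm.injOn hx hd₀m hEq
    have hxb : x = b := by
      rcases le_or_gt b x with hle | hlt
      · exact le_antisymm hx.2 hle
      · exact absurd hdx' (show x < d₀ from hd₀ ▸ lt_min hxd hlt).ne
    rw [← hdx', hxb, hσb]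
  obtain ⟨c', d', hc', hd', hmax, hmin⟩ :=
    aux_pick (hbij.mapsTo hc₀m).1 (hbij.mapsTo hd₀m).2 h3 h4 h5 h6
  exact ⟨c', d', hc', hd', by rw [hmax, hmin]; exact hnice'⟩

/-- Transfer of the "locally nice" property at a point along a strictly antitone
self-homeomorphism of `[a,b]`. -/
lemma aux_trans_anti {X : Type*} [NormedAddCommGroup X] [NormedSpace ℝ X]
    {f gg : ℝ → X} {σ : ℝ → ℝ} {a b x : ℝ} (hab : a ≤ b)
    (hm : StrictAntiOn σ (Set.Icc a b)) (hbij : Set.BijOn σ (Set.Icc a b) (Set.Icc a b))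
    (hge : ∀ y ∈ Set.Icc a b, gg y = f (σ y)) (hx : x ∈ Set.Icc a b)
    (H : ∃ c d : ℝ, c < x ∧ x < d ∧
      ((∀ y ∈ Set.Icc (max c a) (min d b), ∀ z ∈ Set.Icc (max c a) (min d b), gg y = gg z) ∨
       HasC2ArcLengthParam gg (max c a) (min d b))) :
    ∃ c d : ℝ, c < σ x ∧ σ x < d ∧
      ((∀ y ∈ Set.Icc (max c a) (min d b), ∀ z ∈ Set.Icc (max c a) (min d b), f y = f z) ∨
       HasC2ArcLengthParam f (max c a) (min d b)) := by
  obtain ⟨c, d, hcx, hxd, hnice⟩ := H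
  set c₀ := max c a with hc₀
  set d₀ := min d b with hd₀
  have hac₀ : a ≤ c₀ := le_max_right _ _
  have hc₀x : c₀ ≤ x := max_le hcx.le hx.1
  have hxd₀ : x ≤ d₀ := le_min hxd.le hx.2
  have hd₀b : d₀ ≤ b := min_le_right _ _
  have hc₀d₀ : c₀ ≤ d₀ := hc₀x.trans hxd₀
  have hc₀m : c₀ ∈ Set.Icc a b := ⟨hac₀, hc₀d₀.trans hd₀b⟩
  have hd₀m : d₀ ∈ Set.Icc a b := ⟨hac₀.trans hc₀d₀, hd₀b⟩
  have hxm : x ∈ Set.Icc c₀ d₀ := ⟨hc₀x, hxd₀⟩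
  have hlocb : Set.BijOn σ (Set.Icc c₀ d₀) (Set.Icc (σ d₀) (σ c₀)) :=
    aux_bijOn_sub_anti hm hbij hac₀ hc₀d₀ hd₀b
  set τ := Function.invFunOn σ (Set.Icc c₀ d₀) with hτ
  have hinv : Set.InvOn τ σ (Set.Icc c₀ d₀) (Set.Icc (σ d₀) (σ c₀)) := hlocb.invOn_invFunOn
  have hτbij : Set.BijOn τ (Set.Icc (σ d₀) (σ c₀)) (Set.Icc c₀ d₀) := hlocb.symm hinv.symm
  have hτm : StrictAntiOn τ (Set.Icc (σ d₀) (σ c₀)) :=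
    aux_inv_strictAntiOn (hm.mono (Set.Icc_subset_Icc hac₀ hd₀b)) hτbij.mapsTo
      (fun y hy => hinv.2 hy)
  have hfe : ∀ y ∈ Set.Icc (σ d₀) (σ c₀), f y = gg (τ y) := by
    intro y hy
    have h1 : τ y ∈ Set.Icc c₀ d₀ := hτbij.mapsTo hy
    rw [hge (τ y) ⟨hac₀.trans h1.1, h1.2.trans hd₀b⟩, hinv.2 hy]
  have hnice' := aux_nice_anti (hm.antitoneOn hc₀m hd₀m hc₀d₀) hτm hτbij hfe hnice
  obtain ⟨hσa, hσb⟩ := aux_endpoints_anti hab hm hbij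
  have h3 : σ d₀ ≤ σ x := hm.antitoneOn hx hd₀m hxd₀
  have h4 : σ x ≤ σ c₀ := hm.antitoneOn hc₀m hx hc₀x
  have h5 : σ d₀ = σ x → σ d₀ = a := by
    intro hEq
    have hdx' : d₀ = x := hm.injOn hd₀m hx hEq
    have hxb : x = b := by
      rcases le_or_gt b x with hle | hlt
      · exact le_antisymm hx.2 hle
      · exact absurd hdx'.symm (show x < d₀ from hd₀ ▸ lt_min hxd hlt).ne
    rw [hdx', hxb, hσb]
  have h6 : σ x = σ c₀ → σ c₀ = b := by
    intro hEq
    have hcx' : x = c₀ := hm.injOn hx hc₀m hEq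
    have hxa : x = a := by
      rcases le_or_gt x a with hle | hlt
      · exact le_antisymm hle hx.1
      · exact absurd hcx'.symm (max_lt hcx hlt).ne
    rw [← hcx', hxa, hσa]
  obtain ⟨c', d', hc', hd', hmax, hmin⟩ :=
    aux_pick (hbij.mapsTo hd₀m).1 (hbij.mapsTo hc₀m).2 h3 h4 h5 h6
  exact ⟨c', d', hc', hd', by rw [hmax, hmin]; exact hnice'⟩

end Aux

/-- If `f, g : [a,b] → X` are continuous, `f` is `VBG_{1/2}` and `g` is
Lebesgue equivalent to `f`, then `g` is `VBG_{1/2}`. -/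
theorem stmt14 {X : Type*} [NormedAddCommGroup X] [NormedSpace ℝ X]
    {a b : ℝ} (hab : a < b) {f g : ℝ → X}
    (hf : ContinuousOn f (Set.Icc a b)) (hg : ContinuousOn g (Set.Icc a b))
    (hvbg : VBGHalf f a b) (heq : LebEquiv f g a b) :
    VBGHalf g a b := by
  obtain ⟨hfBV, A, hA, hK⟩ := hvbg
  obtain ⟨σ, hσc, hσbij, hgf⟩ := heq
  set τ := Function.invFunOn σ (Set.Icc a b) with hτdef
  have hinv : Set.InvOn τ σ (Set.Icc a b) (Set.Icc a b) := hσbij.invOn_invFunOn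
  have hτbij : Set.BijOn τ (Set.Icc a b) (Set.Icc a b) := hσbij.symm hinv.symm
  have hfg : ∀ y ∈ Set.Icc a b, f y = g (τ y) := fun y hy => by
    rw [hgf (τ y) (hτbij.mapsTo hy), hinv.2 hy]
  rcases hσc.strictMonoOn_of_injOn_Icc' hab.le hσbij.injOn with hm | hm
  · -- monotone case
    have hτm : StrictMonoOn τ (Set.Icc a b) :=
      aux_inv_strictMonoOn hm hτbij.mapsTo (fun y hy => hinv.2 hy)
    obtain ⟨hσa, hσb⟩ := aux_endpoints hab.le hm hσbij
    have hvrel : ∀ x ∈ Set.Icc a b,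
        eVariationOn g (Set.Icc a x) = eVariationOn f (Set.Icc a (σ x)) := by
      intro x hx
      have := aux_evar_mono (aux_bijOn_sub hm hσbij le_rfl hx.1 hx.2)
        ((hm.mono (Set.Icc_subset_Icc le_rfl hx.2)).monotoneOn)
        (fun y hy => hgf y (Set.Icc_subset_Icc le_rfl hx.2 hy))
      rwa [hσa] at this
    have hgBV : BoundedVariationOn g (Set.Icc a b) := by
      show eVariationOn g (Set.Icc a b) ≠ ⊤
      rw [hvrel b ⟨hab.le, le_rfl⟩, hσb]; exact hfBV
    have hvfn : ∀ x ∈ Set.Icc a b, vfn g a x = vfn f a (σ x) := fun x hx =>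
      congrArg ENNReal.toReal (hvrel x hx)
    refine ⟨hgBV, fun m => Set.Icc a b ∩ σ ⁻¹' (A m),
      fun m => ⟨?_, Set.inter_subset_left, ?_⟩, ?_⟩
    · exact hσc.preimage_isClosed_of_isClosed isClosed_Icc (hA m).1
    · refine lt_of_le_of_lt (aux_fracVar_le_mono _ (e := σ) ?_ ?_ ?_) (hA m).2.2
      · exact fun x hx => hx.2
      · exact fun x hx y hy hxy => hm.monotoneOn hx.1 hy.1 hxy
      · intro x hx y hy; rw [hvfn x hx.1, hvfn y hy.1]
    · ext x
      simp only [Kset, Set.mem_setOf_eq, Set.mem_iUnion, Set.mem_inter_iff, Set.mem_preimage]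
      constructor
      · rintro ⟨hxI, hnn⟩
        have hσK : σ x ∈ Kset f a b := by
          refine ⟨hσbij.mapsTo hxI, fun Hf => hnn ?_⟩
          have := aux_trans_mono hab.le hτm hτbij hfg (hσbij.mapsTo hxI) Hf
          rwa [hinv.1 hxI] at this
        rw [hK] at hσK
        obtain ⟨m, hm'⟩ := Set.mem_iUnion.1 hσK
        exact ⟨m, hxI, hm'⟩
      · rintro ⟨m, hxI, hAm⟩
        refine ⟨hxI, fun Hg => ?_⟩
        have hσK : σ x ∈ Kset f a b := by rw [hK]; exact Set.mem_iUnion.2 ⟨m, hAm⟩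
        exact hσK.2 (aux_trans_mono hab.le hm hσbij hgf hxI Hg)
  · -- antitone case
    have hτm : StrictAntiOn τ (Set.Icc a b) :=
      aux_inv_strictAntiOn hm hτbij.mapsTo (fun y hy => hinv.2 hy)
    obtain ⟨hσa, hσb⟩ := aux_endpoints_anti hab.le hm hσbij
    have hvrel : ∀ x ∈ Set.Icc a b,
        eVariationOn g (Set.Icc a x) = eVariationOn f (Set.Icc (σ x) b) := by
      intro x hx
      have := aux_evar_anti (aux_bijOn_sub_anti hm hσbij le_rfl hx.1 hx.2)
        ((hm.mono (Set.Icc_subset_Icc le_rfl hx.2)).antitoneOn)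
        (fun y hy => hgf y (Set.Icc_subset_Icc le_rfl hx.2 hy))
      rwa [hσa] at this
    have hgBV : BoundedVariationOn g (Set.Icc a b) := by
      show eVariationOn g (Set.Icc a b) ≠ ⊤
      rw [hvrel b ⟨hab.le, le_rfl⟩, hσb]; exact hfBV
    have hvfn : ∀ x ∈ Set.Icc a b, vfn g a x = vfn f a b - vfn f a (σ x) := by
      intro x hx
      have hσxm : σ x ∈ Set.Icc a b := hσbij.mapsTo hx
      have hadd := eVariationOn.Icc_add_Icc f (s := Set.univ) hσxm.1 hσxm.2 (Set.mem_univ _)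
      simp only [Set.univ_inter] at hadd
      have h1 : eVariationOn f (Set.Icc a (σ x)) ≠ ⊤ := fun hEq =>
        hfBV (top_le_iff.1 (hEq ▸ eVariationOn.mono f (Set.Icc_subset_Icc le_rfl hσxm.2)))
      have h2 : eVariationOn f (Set.Icc (σ x) b) ≠ ⊤ := fun hEq =>
        hfBV (top_le_iff.1 (hEq ▸ eVariationOn.mono f (Set.Icc_subset_Icc hσxm.1 le_rfl)))
      have hth := congrArg ENNReal.toReal hadd
      rw [ENNReal.toReal_add h1 h2] at hth
      have hgx : vfn g a x = (eVariationOn f (Set.Icc (σ x) b)).toReal :=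
        congrArg ENNReal.toReal (hvrel x hx)
      rw [hgx]
      show (eVariationOn f (Set.Icc (σ x) b)).toReal
        = (eVariationOn f (Set.Icc a b)).toReal - (eVariationOn f (Set.Icc a (σ x))).toReal
      linarith [hth]
    refine ⟨hgBV, fun m => Set.Icc a b ∩ σ ⁻¹' (A m),
      fun m => ⟨?_, Set.inter_subset_left, ?_⟩, ?_⟩
    · exact hσc.preimage_isClosed_of_isClosed isClosed_Icc (hA m).1
    · refine lt_of_le_of_lt (aux_fracVar_le_anti _ (e := σ) ?_ ?_ ?_) (hA m).2.2
      · exact fun x hx => hx.2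
      · exact fun x hx y hy hxy => hm.antitoneOn hx.1 hy.1 hxy
      · intro x hx y hy
        rw [hvfn x hx.1, hvfn y hy.1,
          show (vfn f a b - vfn f a (σ y)) - (vfn f a b - vfn f a (σ x))
            = -(vfn f a (σ y) - vfn f a (σ x)) by ring, abs_neg]
    · ext x
      simp only [Kset, Set.mem_setOf_eq, Set.mem_iUnion, Set.mem_inter_iff, Set.mem_preimage]
      constructor
      · rintro ⟨hxI, hnn⟩
        have hσK : σ x ∈ Kset f a b := by
          refine ⟨hσbij.mapsTo hxI, fun Hf => hnn ?_⟩
          have := aux_trans_anti hab.le hτm hτbij hfg (hσbij.mapsTo hxI) Hf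
          rwa [hinv.1 hxI] at this
        rw [hK] at hσK
        obtain ⟨m, hm'⟩ := Set.mem_iUnion.1 hσK
        exact ⟨m, hxI, hm'⟩
      · rintro ⟨m, hxI, hAm⟩
        refine ⟨hxI, fun Hg => ?_⟩
        have hσK : σ x ∈ Kset f a b := by rw [hK]; exact Set.mem_iUnion.2 ⟨m, hAm⟩
        exact hσK.2 (aux_trans_anti hab.le hm hσbij hgf hxI Hg)
end

section
/- Let X be a normed linear space with a Gâteaux differentiable norm and let f:[a,b]→X be twice differentiable on [a,b]. Then f'(x)=0 for every x∈K_f. -/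
open Set MeasureTheory
open scoped ENNReal NNReal

/-!
If `f' x ≠ 0`, continuity of `f'` gives an interval `[c, d] ∋ x` (relative to `[a, b]`) on
which `f'` does not vanish. There the arc length `v = vfn f c` has derivative `‖f'‖ > 0`:
over a short interval `[u, z]` the variation of `f` is `(z - u) ‖f' t‖` up to the oscillation
of `f'`. Hence `v` maps `[c, d]` homeomorphically onto `[0, V(f, [c, d])]`, and its inverse `w`
has derivative `‖f' ∘ w‖⁻¹`. A Lipschitz, Gâteaux differentiable function such as the norm
obeys the chain rule along differentiable curves, so `‖f'‖` is differentiable, `w` is twice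
differentiable, and `f ∘ w` is a twice differentiable arc-length parametrization of `f` on
`[c, d]`. Thus no point with `f' x ≠ 0` lies in `K_f`.
-/

open Filter Topology Asymptotics Function

theorem IsCompact.continuousOn_invFunOn {α β : Type*} [TopologicalSpace α] [Nonempty α]
    [TopologicalSpace β] [T2Space β] {f : α → β} {s : Set α} (hs : IsCompact s)
    (hf : ContinuousOn f s) (hinj : InjOn f s) :
    ContinuousOn (invFunOn f s) (f '' s) := by
  -- the preimage of a closed set `C` is the compact, hence closed, set `f '' (s ∩ C)`
  refine continuousOn_iff_isClosed.2 fun C hC =>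
    ⟨f '' (s ∩ C), ((hs.inter_right hC).image_of_continuousOn (hf.mono inter_subset_left)).isClosed,
      ?_⟩
  ext y
  constructor
  · rintro ⟨hyC, x, hx, rfl⟩
    rw [mem_preimage, hinj.leftInvOn_invFunOn hx] at hyC
    exact ⟨⟨x, ⟨hx, hyC⟩, rfl⟩, x, hx, rfl⟩
  · rintro ⟨⟨x, ⟨hx, hxC⟩, rfl⟩, -⟩
    exact ⟨by rwa [mem_preimage, hinj.leftInvOn_invFunOn hx], x, hx, rfl⟩

theorem HasDerivWithinAt.of_local_left_inverse {𝕜 : Type*} [NontriviallyNormedField 𝕜]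
    {f g : 𝕜 → 𝕜} {f' a : 𝕜} {s t : Set 𝕜} (hg : Tendsto g (𝓝[s] a) (𝓝[t] (g a)))
    (hf : HasDerivWithinAt f f' t (g a)) (hf' : f' ≠ 0) (ha : a ∈ s)
    (hfg : ∀ᶠ x in 𝓝[s] a, f (g x) = x) : HasDerivWithinAt g f'⁻¹ s a := by
  convert! (hf.hasFDerivWithinAt.of_comp_of_leftInverse hg (hasDerivWithinAt_id a s) hfg
    (f'symm := .toSpanSingleton 𝕜 f'⁻¹) (fun _ ↦ by simp [hf']) ha).hasDerivWithinAt using 1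
  simp

theorem Set.InjOn.hasDerivWithinAt_invFunOn {v v' : ℝ → ℝ} {J : Set ℝ} {s : ℝ}
    (hinj : InjOn v J) (hJ : IsCompact J) (hv : ∀ t ∈ J, HasDerivWithinAt v (v' t) J t)
    (hv' : ∀ t ∈ J, v' t ≠ 0) (hs : s ∈ v '' J) :
    HasDerivWithinAt (invFunOn v J) (v' (invFunOn v J s))⁻¹ (v '' J) s := by
  have hsurj : SurjOn v J (v '' J) := surjOn_image v J
  have hinv_cont : ContinuousOn (invFunOn v J) (v '' J) :=
    hJ.continuousOn_invFunOn (fun t ht => (hv t ht).continuousWithinAt) hinj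
  have hws := hsurj.mapsTo_invFunOn hs
  refine .of_local_left_inverse ?_ (hv _ hws) (hv' _ hws) hs
    (eventually_mem_nhdsWithin.mono fun y hy => hsurj.rightInvOn_invFunOn hy)
  exact tendsto_nhdsWithin_iff.2 ⟨hinv_cont s hs,
    eventually_mem_nhdsWithin.mono fun y hy => hsurj.mapsTo_invFunOn hy⟩

theorem LipschitzWith.hasDerivWithinAt_comp_of_hasLineDerivAt {E F : Type*}
    [NormedAddCommGroup E] [NormedSpace ℝ E] [NormedAddCommGroup F] [NormedSpace ℝ F]
    {φ : E → F} {K : ℝ≥0} (hφ : LipschitzWith K φ) {γ : ℝ → E} {e : E} {φ' : F} {s : Set ℝ}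
    {t : ℝ} (hγ : HasDerivWithinAt γ e s t) (hφ' : HasLineDerivAt ℝ φ φ' (γ t) e) :
    HasDerivWithinAt (φ ∘ γ) φ' s t := by
  rw [hasDerivWithinAt_iff_isLittleO] at hγ ⊢
  have hline : (fun y => φ (γ t + (y - t) • e) - φ (γ t) - (y - t) • φ') =o[𝓝[s] t]
      fun y => y - t := by
    have htend : Tendsto (fun y => y - t) (𝓝[s] t) (𝓝 0) :=
      tendsto_sub_nhds_zero_iff.2 nhdsWithin_le_nhds
    have h := (hasDerivAt_iff_isLittleO.1 hφ').comp_tendsto htend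
    simp only [zero_smul, add_zero, sub_zero] at h
    exact h
  have hlip : (fun y => φ (γ y) - φ (γ t + (y - t) • e)) =o[𝓝[s] t] fun y => y - t := by
    refine (IsBigO.of_bound K (Eventually.of_forall fun y => ?_)).trans_isLittleO hγ
    rw [sub_sub]
    exact hφ.norm_sub_le _ _
  refine (hlip.add hline).congr_left fun y => ?_
  simp only [comp_apply]
  abel

theorem vfn_sub_vfn {X : Type*} [NormedAddCommGroup X] {f : ℝ → X} {c u z : ℝ} (hcu : c ≤ u)
    (huz : u ≤ z) (hbv : BoundedVariationOn f (Icc c z)) :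
    vfn f c z - vfn f c u = (eVariationOn f (Icc u z)).toReal := by
  have hadd := eVariationOn.Icc_add_Icc f hcu huz (mem_univ u)
  rw [univ_inter, univ_inter, univ_inter] at hadd
  rw [vfn, vfn, ← hadd, ENNReal.toReal_add (ne_top_of_le_ne_top hbv
    (eVariationOn.mono f (Icc_subset_Icc_right huz))) (ne_top_of_le_ne_top hbv
    (eVariationOn.mono f (Icc_subset_Icc_left hcu))), add_sub_cancel_left]

section Variation

variable {X : Type*} [NormedAddCommGroup X] [NormedSpace ℝ X] {f f' : ℝ → X}

theorem eVariationOn_Icc_le_of_norm_deriv_le {u z C : ℝ}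
    (hf : ∀ s ∈ Icc u z, HasDerivWithinAt f (f' s) (Icc u z) s)
    (hC : ∀ s ∈ Icc u z, ‖f' s‖ ≤ C) :
    eVariationOn f (Icc u z) ≤ ENNReal.ofReal (C * (z - u)) := by
  rcases lt_or_ge z u with hzu | huz
  · simp [Icc_eq_empty_of_lt hzu]
  have hC0 : 0 ≤ C := (norm_nonneg _).trans (hC u (left_mem_Icc.2 huz))
  have hlip : LipschitzOnWith C.toNNReal f (Icc u z) :=
    (convex_Icc u z).lipschitzOnWith_of_nnnorm_hasDerivWithin_le hf fun s hs => by
      rw [← NNReal.coe_le_coe, coe_nnnorm, Real.coe_toNNReal _ hC0]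
      exact hC s hs
  calc eVariationOn f (Icc u z) = eVariationOn (f ∘ id) (Icc u z) := rfl
    _ ≤ C.toNNReal * eVariationOn id (Icc u z) := hlip.comp_eVariationOn_le (mapsTo_id _)
    _ = ENNReal.ofReal (C * (z - u)) := by
      rw [eVariationOn_id_Icc, ENNReal.ofReal_mul hC0]
      rfl

theorem boundedVariationOn_Icc_of_hasDerivWithinAt {c d : ℝ}
    (hf : ∀ s ∈ Icc c d, HasDerivWithinAt f (f' s) (Icc c d) s)
    (hf' : ContinuousOn f' (Icc c d)) : BoundedVariationOn f (Icc c d) := by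
  obtain ⟨M, hM⟩ := isCompact_Icc.exists_bound_of_continuousOn hf'
  exact ne_top_of_le_ne_top ENNReal.ofReal_ne_top (eVariationOn_Icc_le_of_norm_deriv_le hf hM)

theorem abs_toReal_eVariationOn_Icc_sub_le {u z η : ℝ} {e : X} (huz : u ≤ z)
    (hf : ∀ s ∈ Icc u z, HasDerivWithinAt f (f' s) (Icc u z) s)
    (he : ∀ s ∈ Icc u z, ‖f' s - e‖ ≤ η) :
    |(eVariationOn f (Icc u z)).toReal - (z - u) * ‖e‖| ≤ η * (z - u) := by
  have hupper : eVariationOn f (Icc u z) ≤ ENNReal.ofReal ((‖e‖ + η) * (z - u)) :=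
    eVariationOn_Icc_le_of_norm_deriv_le hf fun s hs =>
      (norm_le_norm_add_norm_sub' (f' s) e).trans (by linarith [he s hs])
  have hfin : eVariationOn f (Icc u z) ≠ ⊤ := ne_top_of_le_ne_top ENNReal.ofReal_ne_top hupper
  have hchord : ‖f z - f u‖ ≤ (eVariationOn f (Icc u z)).toReal := by
    simpa [edist_dist, dist_eq_norm] using ENNReal.toReal_mono hfin
      (eVariationOn.edist_le f (right_mem_Icc.2 huz) (left_mem_Icc.2 huz))
  have hmvt : ‖f z - f u - (z - u) • e‖ ≤ η * (z - u) := by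
    have hg : ∀ s ∈ Icc u z, HasDerivWithinAt (f - fun y => id y • e) (f' s - e) (Icc u z) s :=
      fun s hs => by
        simpa only [one_smul] using (hf s hs).sub ((hasDerivWithinAt_id s _).smul_const e)
    have := (convex_Icc u z).norm_image_sub_le_of_norm_hasDerivWithin_le hg he
      (left_mem_Icc.2 huz) (right_mem_Icc.2 huz)
    rwa [Pi.sub_apply, Pi.sub_apply, Real.norm_of_nonneg (sub_nonneg.2 huz), sub_sub_sub_comm,
      ← sub_smul] at this
  have hlower : (z - u) * ‖e‖ ≤ ‖f z - f u‖ + η * (z - u) := by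
    have := norm_le_norm_add_norm_sub' ((z - u) • e) (f z - f u)
    rw [norm_smul, Real.norm_of_nonneg (sub_nonneg.2 huz), norm_sub_rev ((z - u) • e)] at this
    linarith
  have hη : 0 ≤ η := (norm_nonneg _).trans (he u (left_mem_Icc.2 huz))
  have := ENNReal.toReal_mono ENNReal.ofReal_ne_top hupper
  rw [ENNReal.toReal_ofReal (by positivity)] at this
  rw [abs_le]
  constructor <;> linarith

theorem hasDerivWithinAt_vfn {c d t : ℝ}
    (hf : ∀ s ∈ Icc c d, HasDerivWithinAt f (f' s) (Icc c d) s)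
    (hf' : ContinuousOn f' (Icc c d)) (ht : t ∈ Icc c d) :
    HasDerivWithinAt (vfn f c) ‖f' t‖ (Icc c d) t := by
  have hbv := boundedVariationOn_Icc_of_hasDerivWithinAt hf hf'
  have hvar : ∀ {u z}, u ∈ Icc c d → z ∈ Icc c d → u ≤ z →
      vfn f c z - vfn f c u = (eVariationOn f (Icc u z)).toReal := fun hu hz huz =>
    vfn_sub_vfn hu.1 huz (hbv.mono (Icc_subset_Icc_right hz.2))
  have hsub : ∀ {u z}, u ∈ Icc c d → z ∈ Icc c d → Icc u z ⊆ Icc c d := fun hu hz =>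
    Icc_subset_Icc hu.1 hz.2
  rw [hasDerivWithinAt_iff_isLittleO, isLittleO_iff]
  intro ε hε
  obtain ⟨δ, hδ, hclose⟩ := Metric.continuousWithinAt_iff.1 (hf' t ht) ε hε
  filter_upwards [inter_mem_nhdsWithin (Icc c d) (Metric.ball_mem_nhds t hδ)]
    with y ⟨hy, hyδ⟩
  have hosc : ∀ s ∈ uIcc t y, ‖f' s - f' t‖ ≤ ε := fun s hs => by
    have hs' : s ∈ Icc c d := uIcc_subset_Icc ht hy hs
    refine (dist_eq_norm (f' s) (f' t) ▸ hclose hs' ?_).le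
    exact (Real.dist_le_of_mem_uIcc hs left_mem_uIcc).trans_lt
      (by rwa [Metric.mem_ball, dist_comm] at hyδ)
  simp only [smul_eq_mul, Real.norm_eq_abs]
  rcases le_total t y with hty | hyt
  · have := abs_toReal_eVariationOn_Icc_sub_le hty
      (fun s hs => (hf s (hsub ht hy hs)).mono (hsub ht hy))
      fun s hs => hosc s (Icc_subset_uIcc hs)
    rwa [abs_of_nonneg (sub_nonneg.2 hty), hvar ht hy hty]
  · have := abs_toReal_eVariationOn_Icc_sub_le hyt
      (fun s hs => (hf s (hsub hy ht hs)).mono (hsub hy ht))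
      fun s hs => hosc s (Icc_subset_uIcc' hs)
    have hflip : vfn f c y - vfn f c t - (y - t) * ‖f' t‖
        = -((eVariationOn f (Icc y t)).toReal - (t - y) * ‖f' t‖) := by
      rw [← hvar hy ht hyt]
      ring
    rwa [hflip, abs_neg, abs_sub_comm y t, abs_of_nonneg (sub_nonneg.2 hyt)]

end Variation

theorem TwiceDiffOn.comp {X : Type*} [NormedAddCommGroup X] [NormedSpace ℝ X] {g : ℝ → X}
    {w : ℝ → ℝ} {c d p q : ℝ} (hg : TwiceDiffOn g c d) (hw : TwiceDiffOn w p q)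
    (hmaps : MapsTo w (Icc p q) (Icc c d)) : TwiceDiffOn (g ∘ w) p q := by
  obtain ⟨g', g'', hg', hg''⟩ := hg
  obtain ⟨w', w'', hw', hw''⟩ := hw
  refine ⟨fun s => w' s • g' (w s), fun s => w' s • (w' s • g'' (w s)) + w'' s • g' (w s),
    fun s hs => ?_, fun s hs => ?_⟩
  · exact (hg' (w s) (hmaps hs)).scomp s (hw' s hs) hmaps
  · exact (hw'' s hs).smul ((hg'' (w s) (hmaps hs)).scomp s (hw' s hs) hmaps)

theorem hasC2ArcLengthParam_of_deriv_ne_zero {X : Type*} [NormedAddCommGroup X]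
    [NormedSpace ℝ X] (hnorm : GateauxSmoothNorm X) {c d : ℝ} (hcd : c ≤ d) {f f' f'' : ℝ → X}
    (hf : ∀ t ∈ Icc c d, HasDerivWithinAt f (f' t) (Icc c d) t)
    (hf' : ∀ t ∈ Icc c d, HasDerivWithinAt f' (f'' t) (Icc c d) t)
    (hne : ∀ t ∈ Icc c d, f' t ≠ 0) : HasC2ArcLengthParam f c d := by
  have hcont : ContinuousOn f' (Icc c d) := fun t ht => (hf' t ht).continuousWithinAt
  have hspeed : ∀ t ∈ Icc c d, 0 < ‖f' t‖ := fun t ht => norm_pos_iff.2 (hne t ht)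
  have hv : ∀ t ∈ Icc c d, HasDerivWithinAt (vfn f c) ‖f' t‖ (Icc c d) t :=
    fun t ht => hasDerivWithinAt_vfn hf hcont ht
  have hmono : StrictMonoOn (vfn f c) (Icc c d) :=
    strictMonoOn_of_hasDerivWithinAt_pos (convex_Icc c d)
      (fun t ht => (hv t ht).continuousWithinAt)
      (fun t ht => (hv t (interior_subset ht)).mono interior_subset)
      fun t ht => hspeed t (interior_subset ht)
  have himage : vfn f c '' Icc c d = Icc 0 (vfn f c d) := by
    have hv0 : vfn f c c = 0 := by simp [vfn]
    rw [← hv0]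
    exact ContinuousOn.image_Icc_of_monotoneOn hcd (fun t ht => (hv t ht).continuousWithinAt)
      hmono.monotoneOn
  set w := invFunOn (vfn f c) (Icc c d)
  have hmaps : MapsTo w (Icc 0 (vfn f c d)) (Icc c d) :=
    himage ▸ (surjOn_image (vfn f c) (Icc c d)).mapsTo_invFunOn
  have hw : ∀ s ∈ Icc 0 (vfn f c d), HasDerivWithinAt w ‖f' (w s)‖⁻¹ (Icc 0 (vfn f c d)) s := by
    rw [← himage]
    exact fun s hs => hmono.injOn.hasDerivWithinAt_invFunOn isCompact_Icc hv
      (fun t ht => (hspeed t ht).ne') hs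
  choose! L hL using hnorm
  have hspeed_deriv : ∀ t ∈ Icc c d,
      HasDerivWithinAt (fun t => ‖f' t‖) (L (f' t) (f'' t)) (Icc c d) t := fun t ht =>
    lipschitzWith_one_norm.hasDerivWithinAt_comp_of_hasLineDerivAt (hf' t ht) (hL _ (hne t ht) _)
  have hw2 : TwiceDiffOn w 0 (vfn f c d) :=
    ⟨_, _, hw, fun s hs => ((hspeed_deriv _ (hmaps hs)).comp s (hw s hs) hmaps).inv
      (hspeed _ (hmaps hs)).ne'⟩
  exact ⟨boundedVariationOn_Icc_of_hasDerivWithinAt hf hcont, f ∘ w,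
    TwiceDiffOn.comp ⟨f', f'', hf, hf'⟩ hw2 hmaps,
    fun t ht => congrArg f (hmono.injOn.leftInvOn_invFunOn ht)⟩

theorem stmt15_general {X : Type*} [NormedAddCommGroup X] [NormedSpace ℝ X]
    (hnorm : GateauxSmoothNorm X) {a b : ℝ} {f f' f'' : ℝ → X}
    (hdf : ∀ x ∈ Set.Icc a b, HasDerivWithinAt f (f' x) (Set.Icc a b) x)
    (hdf' : ∀ x ∈ Set.Icc a b, HasDerivWithinAt f' (f'' x) (Set.Icc a b) x) :
    ∀ x ∈ Kset f a b, f' x = 0 := by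
  rintro x ⟨hx, hnot⟩
  by_contra hne
  obtain ⟨δ, hδ, hball⟩ := Metric.mem_nhdsWithin_iff.1
    ((hdf' x hx).continuousWithinAt.tendsto.eventually_ne hne)
  refine hnot ⟨x - δ / 2, x + δ / 2, by linarith, by linarith, Or.inr ?_⟩
  have hsub : Icc (max (x - δ / 2) a) (min (x + δ / 2) b) ⊆ Metric.ball x δ ∩ Icc a b := by
    rintro y ⟨hy₁, hy₂⟩
    rw [max_le_iff] at hy₁
    rw [le_min_iff] at hy₂
    refine ⟨?_, hy₁.2, hy₂.2⟩
    rw [Metric.mem_ball, Real.dist_eq, abs_sub_lt_iff]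
    constructor <;> linarith
  have hsubab := hsub.trans inter_subset_right
  have hcd : max (x - δ / 2) a ≤ min (x + δ / 2) b :=
    max_le (le_min (by linarith) (by linarith [hx.2]))
      (le_min (by linarith [hx.1]) (hx.1.trans hx.2))
  exact hasC2ArcLengthParam_of_deriv_ne_zero hnorm hcd
    (fun t ht => (hdf t (hsubab ht)).mono hsubab)
    (fun t ht => (hdf' t (hsubab ht)).mono hsubab) fun t ht => hball (hsub ht)

/-- If `X` has a Gâteaux differentiable norm and `f : [a,b] → X` is
twice differentiable on `[a,b]`, then `f'(x) = 0` for every `x ∈ K_f`. -/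
theorem stmt15 {X : Type*} [NormedAddCommGroup X] [NormedSpace ℝ X]
    (hnorm : GateauxSmoothNorm X) {a b : ℝ} (hab : a < b) {f f' f'' : ℝ → X}
    (hdf : ∀ x ∈ Set.Icc a b, HasDerivWithinAt f (f' x) (Set.Icc a b) x)
    (hdf' : ∀ x ∈ Set.Icc a b, HasDerivWithinAt f' (f'' x) (Set.Icc a b) x) :
    ∀ x ∈ Kset f a b, f' x = 0 :=
  stmt15_general hnorm hdf hdf'
end
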